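/- arXiv:1206.2976 — 6 statements merged into one kernel-verified Lean document; each statement's English description precedes it below -/
import Mathlib

section
/- Commutator theorem for densities (Theorem 2.2, volume-form case): Let u, η : ℝ × E → E be smooth time-dependent vector fields and ρ : ℝ × E → ℝ a smooth time-dependent scalar (density) field. Then pointwise on ℝ × E one has ∂t(div(ρη)) + div((div(ρη))·u) = div(ρ·(∂t η + [u,η])) + div((∂t ρ + div(ρu))·η), where ρη denotes the pointwise scalar multiple (t,x) ↦ ρ(t,x)·η(t,x). (This is the relation [∂t + L_u, L_η](ρ dV) = L_{∂t η + [u,η]}(ρ dV), using that the Lie derivative of the density ρ dV along w is div(ρw) dV.) -/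
open scoped RealInnerProductSpace
open MeasureTheory
open ContinuousLinearMap
open scoped ContDiff
noncomputable section

/-- Spatial Fréchet derivative `D_x w(t,x)` of a time-dependent field. -/
def Dx {n : ℕ} {F : Type*} [NormedAddCommGroup F] [NormedSpace ℝ F]
    (w : ℝ × EuclideanSpace ℝ (Fin n) → F) (t : ℝ) (x : EuclideanSpace ℝ (Fin n)) :
    EuclideanSpace ℝ (Fin n) →L[ℝ] F :=
  fderiv ℝ (fun y => w (t, y)) x

/-- Partial time derivative `∂ₜ w(t,x)` of a time-dependent field. -/
def dt {n : ℕ} {F : Type*} [NormedAddCommGroup F] [NormedSpace ℝ F]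
    (w : ℝ × EuclideanSpace ℝ (Fin n) → F) (t : ℝ) (x : EuclideanSpace ℝ (Fin n)) : F :=
  deriv (fun τ => w (τ, x)) t

/-- Lie bracket `[u,η](t,x) = D_x η(t,x)(u(t,x)) − D_x u(t,x)(η(t,x))`. -/
def bracket {n : ℕ} (u η : ℝ × EuclideanSpace ℝ (Fin n) → EuclideanSpace ℝ (Fin n))
    (t : ℝ) (x : EuclideanSpace ℝ (Fin n)) : EuclideanSpace ℝ (Fin n) :=
  Dx η t x (u (t, x)) - Dx u t x (η (t, x))

/-- Divergence `div w(t,x) = trace (D_x w(t,x))`. -/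
def dive {n : ℕ} (w : ℝ × EuclideanSpace ℝ (Fin n) → EuclideanSpace ℝ (Fin n))
    (t : ℝ) (x : EuclideanSpace ℝ (Fin n)) : ℝ :=
  LinearMap.trace ℝ _ (Dx w t x : EuclideanSpace ℝ (Fin n) →ₗ[ℝ] EuclideanSpace ℝ (Fin n))

/-- Spatial gradient of a time-dependent scalar field. -/
def grad {n : ℕ} (f : ℝ × EuclideanSpace ℝ (Fin n) → ℝ) (t : ℝ)
    (x : EuclideanSpace ℝ (Fin n)) : EuclideanSpace ℝ (Fin n) :=
  gradient (fun y => f (t, y)) x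



section Aux
variable {n : ℕ}
abbrev Em (n : ℕ) := EuclideanSpace ℝ (Fin n)
abbrev Pn (n : ℕ) := ℝ × Em n
def iE (n : ℕ) : Em n →L[ℝ] Pn n := ContinuousLinearMap.inr ℝ ℝ (Em n)

def divL (n : ℕ) : (Pn n →L[ℝ] Em n) →ₗ[ℝ] ℝ where
  toFun L := LinearMap.trace ℝ (Em n) ((L.comp (iE n)) : Em n →ₗ[ℝ] Em n)
  map_add' L M := by
    have : (((L + M).comp (iE n)) : Em n →ₗ[ℝ] Em n)
        = ((L.comp (iE n)) : Em n →ₗ[ℝ] Em n) + ((M.comp (iE n)) : Em n →ₗ[ℝ] Em n) := by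
      ext v; simp
    simp only []
    show (LinearMap.trace ℝ (Em n)) (((L + M).comp (iE n) : Em n →ₗ[ℝ] Em n)) = _
    rw [this, map_add]
  map_smul' c L := by
    have : (((c • L).comp (iE n)) : Em n →ₗ[ℝ] Em n)
        = c • ((L.comp (iE n)) : Em n →ₗ[ℝ] Em n) := by ext v; simp
    show (LinearMap.trace ℝ (Em n)) (((c • L).comp (iE n) : Em n →ₗ[ℝ] Em n)) = _
    rw [this, _root_.map_smul]
    rfl

def divC (n : ℕ) : (Pn n →L[ℝ] Em n) →L[ℝ] ℝ := LinearMap.toContinuousLinearMap (divL n)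

@[simp] lemma divC_apply (L : Pn n →L[ℝ] Em n) :
    divC n L = LinearMap.trace ℝ (Em n) ((L.comp (iE n)) : Em n →ₗ[ℝ] Em n) := rfl

lemma trace_eq_sum (f : Em n →ₗ[ℝ] Em n) :
    LinearMap.trace ℝ (Em n) f = ∑ i, f (EuclideanSpace.single i 1) i := by
  rw [LinearMap.trace_eq_matrix_trace ℝ (EuclideanSpace.basisFun (Fin n) ℝ).toBasis f,
    Matrix.trace]
  simp [Matrix.diag, LinearMap.toMatrix_apply, EuclideanSpace.basisFun_apply]

lemma expand_clm (φ : Em n →L[ℝ] ℝ) (v : Em n) :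
    φ v = ∑ i, v i * φ (EuclideanSpace.single i 1) := by
  have hv : v = ∑ i, v i • EuclideanSpace.single i (1:ℝ) := by
    ext j
    rw [WithLp.ofLp_sum, Finset.sum_apply]
    simp [EuclideanSpace.single_apply]
  conv_lhs => rw [hv]
  simp [mul_comm]

lemma divC_smulRight (φ : Pn n →L[ℝ] ℝ) (v : Em n) :
    divC n (φ.smulRight v) = φ (iE n v) := by
  rw [divC_apply, trace_eq_sum]
  have h : φ (iE n v) = (φ.comp (iE n)) v := rfl
  rw [h, expand_clm]
  refine Finset.sum_congr rfl fun i _ => ?_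
  simp [mul_comm]

lemma divC_symm (H : Pn n →L[ℝ] Pn n →L[ℝ] Em n)
    (hs : ∀ a b, H a b = H b a) (a : Pn n) :
    divC n (H.flip a) = divC n (H a) := by
  rw [divC_apply, divC_apply, trace_eq_sum, trace_eq_sum]
  refine Finset.sum_congr rfl fun i _ => ?_
  simp only [ContinuousLinearMap.coe_comp, LinearMap.coe_comp, Function.comp_apply,
    ContinuousLinearMap.coe_coe, ContinuousLinearMap.flip_apply]
  rw [hs]

lemma divC_comp_comm (A B : Pn n →L[ℝ] Em n) :
    divC n (A.comp ((iE n).comp B)) = divC n (B.comp ((iE n).comp A)) := by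
  rw [divC_apply, divC_apply]
  have h1 : (((A.comp ((iE n).comp B)).comp (iE n)) : Em n →ₗ[ℝ] Em n)
      = ((A.comp (iE n) : Em n →ₗ[ℝ] Em n) * (B.comp (iE n) : Em n →ₗ[ℝ] Em n)) := by
    ext v; simp [Module.End.mul_apply]
  have h2 : (((B.comp ((iE n).comp A)).comp (iE n)) : Em n →ₗ[ℝ] Em n)
      = ((B.comp (iE n) : Em n →ₗ[ℝ] Em n) * (A.comp (iE n) : Em n →ₗ[ℝ] Em n)) := by
    ext v; simp [Module.End.mul_apply]
  rw [h1, h2, LinearMap.trace_mul_comm]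


def e1 (n : ℕ) : Pn n := (1, 0)

lemma Dx_eq {F : Type*} [NormedAddCommGroup F] [NormedSpace ℝ F]
    (w : Pn n → F) (t : ℝ) (x : Em n) (h : DifferentiableAt ℝ w (t, x)) :
    Dx w t x = (fderiv ℝ w (t, x)).comp (iE n) := by
  have : HasFDerivAt (fun y : Em n => w (t, y)) ((fderiv ℝ w (t, x)).comp (iE n)) x :=
    h.hasFDerivAt.comp x (hasFDerivAt_prodMk_right t x)
  exact this.fderiv

lemma dt_eq {F : Type*} [NormedAddCommGroup F] [NormedSpace ℝ F]
    (w : Pn n → F) (t : ℝ) (x : Em n) (h : DifferentiableAt ℝ w (t, x)) :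
    dt w t x = fderiv ℝ w (t, x) (e1 n) := by
  have h1 : HasFDerivAt (fun τ : ℝ => w (τ, x))
      ((fderiv ℝ w (t, x)).comp (ContinuousLinearMap.inl ℝ ℝ (Em n))) t :=
    h.hasFDerivAt.comp t (hasFDerivAt_prodMk_left t x)
  have h2 := h1.hasDerivAt
  rw [dt, h2.deriv]
  simp [e1]

lemma dive_eq (w : Pn n → Em n) (t : ℝ) (x : Em n) (h : DifferentiableAt ℝ w (t, x)) :
    dive w t x = divC n (fderiv ℝ w (t, x)) := by
  rw [dive, Dx_eq w t x h, divC_apply]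

lemma divC_fderiv_smul (a : Pn n → ℝ) (v : Pn n → Em n) (p : Pn n)
    (ha : DifferentiableAt ℝ a p) (hv : DifferentiableAt ℝ v p) :
    divC n (fderiv ℝ (fun q => a q • v q) p)
      = fderiv ℝ a p (iE n (v p)) + a p * divC n (fderiv ℝ v p) := by
  rw [fderiv_fun_smul ha hv, map_add, _root_.map_smul, divC_smulRight, smul_eq_mul]
  ring

lemma fderiv_clm_const_apply (a : Pn n → ℝ) (p : Pn n)
    (ha : DifferentiableAt ℝ (fderiv ℝ a) p) (c : Pn n) (w : Pn n) :
    fderiv ℝ (fun q => fderiv ℝ a q c) p w = fderiv ℝ (fderiv ℝ a) p w c := by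
  rw [fderiv_clm_apply ha (differentiableAt_const c)]
  simp

lemma dApply (a : Pn n → ℝ) (v : Pn n → Em n)
    (ha : ContDiff ℝ ∞ a) (hv : ContDiff ℝ ∞ v) (p w : Pn n) :
    fderiv ℝ (fun q => fderiv ℝ a q (iE n (v q)) + a q * divC n (fderiv ℝ v q)) p w
      = fderiv ℝ (fderiv ℝ a) p w (iE n (v p))
        + fderiv ℝ a p (iE n (fderiv ℝ v p w))
        + (divC n (fderiv ℝ v p) * fderiv ℝ a p w
        + a p * divC n (fderiv ℝ (fderiv ℝ v) p w)) := by
  have ha' : ContDiff ℝ ∞ (fderiv ℝ a) := (contDiff_infty_iff_fderiv.1 ha).2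
  have hv' : ContDiff ℝ ∞ (fderiv ℝ v) := (contDiff_infty_iff_fderiv.1 hv).2
  have hiv : DifferentiableAt ℝ (fun q => iE n (v q)) p :=
    ((iE n).contDiff.comp hv).differentiable (by simp) |>.differentiableAt
  have h1 : DifferentiableAt ℝ (fun q => fderiv ℝ a q (iE n (v q))) p :=
    ((ha'.clm_apply ((iE n).contDiff.comp hv)).differentiable (by simp)).differentiableAt
  have h2 : DifferentiableAt ℝ (fun q => a q * divC n (fderiv ℝ v q)) p :=
    ((ha.mul ((divC n).contDiff.comp hv')).differentiable (by simp)).differentiableAt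
  rw [fderiv_fun_add h1 h2, ContinuousLinearMap.add_apply]
  have he1 : fderiv ℝ (fun q => fderiv ℝ a q (iE n (v q))) p w
      = fderiv ℝ (fderiv ℝ a) p w (iE n (v p)) + fderiv ℝ a p (iE n (fderiv ℝ v p w)) := by
    rw [fderiv_clm_apply (ha'.differentiable (by simp)).differentiableAt hiv]
    have : fderiv ℝ (fun q => iE n (v q)) p
        = (iE n).comp (fderiv ℝ v p) :=
      ((iE n).hasFDerivAt.comp p ((hv.differentiable (by simp)).differentiableAt).hasFDerivAt).fderiv
    rw [this]
    simp
    ring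
  have he2 : fderiv ℝ (fun q => a q * divC n (fderiv ℝ v q)) p w
      = divC n (fderiv ℝ v p) * fderiv ℝ a p w
        + a p * divC n (fderiv ℝ (fderiv ℝ v) p w) := by
    have hd : fderiv ℝ (fun q => divC n (fderiv ℝ v q)) p
        = (divC n).comp (fderiv ℝ (fderiv ℝ v) p) :=
      ((divC n).hasFDerivAt.comp p ((hv'.differentiable (by simp)).differentiableAt).hasFDerivAt).fderiv
    have h2b : DifferentiableAt ℝ (fun q => divC n (fderiv ℝ v q)) p :=
      (((divC n).contDiff.comp hv').differentiable (by simp)).differentiableAt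
    rw [fderiv_fun_mul ((ha.differentiable (by simp)).differentiableAt) h2b, hd]
    simp
    ring
  rw [he1, he2]

lemma divC_fderiv_G (u η : Pn n → Em n) (hu : ContDiff ℝ (⊤ : ℕ∞) u) (hη : ContDiff ℝ (⊤ : ℕ∞) η) (p : Pn n) :
    divC n (fderiv ℝ (fun q => fderiv ℝ η q (e1 n)
        + (fderiv ℝ η q (iE n (u q)) - fderiv ℝ u q (iE n (η q)))) p)
      = divC n (fderiv ℝ (fderiv ℝ η) p (e1 n))
        + divC n (fderiv ℝ (fderiv ℝ η) p (iE n (u p)))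
        - divC n (fderiv ℝ (fderiv ℝ u) p (iE n (η p))) := by
  have hu0 : ContDiff ℝ ∞ u := hu.of_le (by simp)
  have hη0 : ContDiff ℝ ∞ η := hη.of_le (by simp)
  have hu' : ContDiff ℝ ∞ (fderiv ℝ u) := (contDiff_infty_iff_fderiv.1 hu0).2
  have hη' : ContDiff ℝ ∞ (fderiv ℝ η) := (contDiff_infty_iff_fderiv.1 hη0).2
  have hud : DifferentiableAt ℝ u p := (hu0.differentiable (by simp)).differentiableAt
  have hηd : DifferentiableAt ℝ η p := (hη0.differentiable (by simp)).differentiableAt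
  have hu'd : DifferentiableAt ℝ (fderiv ℝ u) p :=
    (hu'.differentiable (by simp)).differentiableAt
  have hη'd : DifferentiableAt ℝ (fderiv ℝ η) p :=
    (hη'.differentiable (by simp)).differentiableAt
  have hiu : DifferentiableAt ℝ (fun q => iE n (u q)) p := ((iE n).differentiable.comp
    (hu0.differentiable (by simp))).differentiableAt
  have hiη : DifferentiableAt ℝ (fun q => iE n (η q)) p := ((iE n).differentiable.comp
    (hη0.differentiable (by simp))).differentiableAt
  have hT1 : DifferentiableAt ℝ (fun q => fderiv ℝ η q (e1 n)) p :=
    hη'd.clm_apply (differentiableAt_const _)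
  have hT2 : DifferentiableAt ℝ (fun q => fderiv ℝ η q (iE n (u q))) p := hη'd.clm_apply hiu
  have hT3 : DifferentiableAt ℝ (fun q => fderiv ℝ u q (iE n (η q))) p := hu'd.clm_apply hiη
  have hfiu : fderiv ℝ (fun q => iE n (u q)) p = (iE n).comp (fderiv ℝ u p) :=
    ((iE n).hasFDerivAt.comp p hud.hasFDerivAt).fderiv
  have hfiη : fderiv ℝ (fun q => iE n (η q)) p = (iE n).comp (fderiv ℝ η p) :=
    ((iE n).hasFDerivAt.comp p hηd.hasFDerivAt).fderiv
  rw [fderiv_fun_add hT1 (hT2.fun_sub hT3), fderiv_fun_sub hT2 hT3,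
    fderiv_clm_apply hη'd (differentiableAt_const _),
    fderiv_clm_apply hη'd hiu, fderiv_clm_apply hu'd hiη, hfiu, hfiη]
  have hsymη := (hη.contDiffAt (x := p)).isSymmSndFDerivAt (by simp; exact WithTop.coe_le_coe.2 le_top)
  have hsymu := (hu.contDiffAt (x := p)).isSymmSndFDerivAt (by simp; exact WithTop.coe_le_coe.2 le_top)
  simp only [fderiv_fun_const, Pi.zero_apply, ContinuousLinearMap.comp_zero, zero_add,
    map_add, map_sub]
  rw [divC_symm _ hsymη, divC_symm _ hsymη, divC_symm _ hsymu, divC_comp_comm]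
  ring

end Aux

/-- Commutator theorem for densities (Theorem 2.2, volume-form case):
`[∂ₜ + L_u, L_η](ρ dV) = L_{∂ₜη + [u,η]}(ρ dV)`, using that the Lie derivative of the
density `ρ dV` along `w` is `div(ρ w) dV`. -/
theorem commutator_density {n : ℕ} (hn : 1 ≤ n)
    (u η : ℝ × EuclideanSpace ℝ (Fin n) → EuclideanSpace ℝ (Fin n))
    (ρ : ℝ × EuclideanSpace ℝ (Fin n) → ℝ)
    (hu : ContDiff ℝ (⊤ : ℕ∞) u) (hη : ContDiff ℝ (⊤ : ℕ∞) η) (hρ : ContDiff ℝ (⊤ : ℕ∞) ρ) :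
    ∀ (t : ℝ) (x : EuclideanSpace ℝ (Fin n)),
      dt (fun p => dive (fun q => ρ q • η q) p.1 p.2) t x
        + dive (fun p => dive (fun q => ρ q • η q) p.1 p.2 • u p) t x
      = dive (fun p => ρ p • (dt η p.1 p.2 + bracket u η p.1 p.2)) t x
        + dive (fun p => (dt ρ p.1 p.2 + dive (fun q => ρ q • u q) p.1 p.2) • η p) t x := by
  intro t x
  have hu0 : ContDiff ℝ ∞ u := hu.of_le (by simp)
  have hη0 : ContDiff ℝ ∞ η := hη.of_le (by simp)
  have hρ0 : ContDiff ℝ ∞ ρ := hρ.of_le (by simp)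
  have hu' : ContDiff ℝ ∞ (fderiv ℝ u) := (contDiff_infty_iff_fderiv.1 hu0).2
  have hη' : ContDiff ℝ ∞ (fderiv ℝ η) := (contDiff_infty_iff_fderiv.1 hη0).2
  have hρ' : ContDiff ℝ ∞ (fderiv ℝ ρ) := (contDiff_infty_iff_fderiv.1 hρ0).2
  have hdu : Differentiable ℝ u := hu0.differentiable (by simp)
  have hdη : Differentiable ℝ η := hη0.differentiable (by simp)
  have hdρ : Differentiable ℝ ρ := hρ0.differentiable (by simp)
  have hdη' : Differentiable ℝ (fderiv ℝ η) := hη'.differentiable (by simp)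
  have hdρ' : Differentiable ℝ (fderiv ℝ ρ) := hρ'.differentiable (by simp)
  set funF : Pn n → ℝ :=
    fun q => fderiv ℝ ρ q (iE n (η q)) + ρ q * divC n (fderiv ℝ η q) with hfunF_def
  set funG : Pn n → Em n := fun q => fderiv ℝ η q (e1 n)
      + (fderiv ℝ η q (iE n (u q)) - fderiv ℝ u q (iE n (η q))) with hfunG_def
  set funH : Pn n → ℝ := fun q => fderiv ℝ ρ q (e1 n)
      + (fderiv ℝ ρ q (iE n (u q)) + ρ q * divC n (fderiv ℝ u q)) with hfunH_def
  have hσ : ContDiff ℝ ∞ (fun q => ρ q • η q) := hρ0.smul hη0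
  have hσu : ContDiff ℝ ∞ (fun q => ρ q • u q) := hρ0.smul hu0
  have hF : ContDiff ℝ ∞ funF :=
    (hρ'.clm_apply ((iE n).contDiff.comp hη0)).add (hρ0.mul ((divC n).contDiff.comp hη'))
  have hG : ContDiff ℝ ∞ funG :=
    (hη'.clm_apply contDiff_const).add ((hη'.clm_apply ((iE n).contDiff.comp hu0)).sub
      (hu'.clm_apply ((iE n).contDiff.comp hη0)))
  have hHrest : ContDiff ℝ ∞
      (fun q => fderiv ℝ ρ q (iE n (u q)) + ρ q * divC n (fderiv ℝ u q)) :=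
    (hρ'.clm_apply ((iE n).contDiff.comp hu0)).add (hρ0.mul ((divC n).contDiff.comp hu'))
  have hH : ContDiff ℝ ∞ funH := (hρ'.clm_apply contDiff_const).add hHrest
  -- pointwise rewrites of the statement's integrand functions
  have hFσ : ∀ q : Pn n, dive (fun q' => ρ q' • η q') q.1 q.2 = funF q := by
    intro q
    rw [dive_eq _ q.1 q.2 ((hσ.differentiable (by simp)).differentiableAt)]
    exact divC_fderiv_smul ρ η q hdρ.differentiableAt hdη.differentiableAt
  have hGeq : ∀ q : Pn n, dt η q.1 q.2 + bracket u η q.1 q.2 = funG q := by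
    intro q
    rw [dt_eq η q.1 q.2 hdη.differentiableAt, bracket,
      Dx_eq η q.1 q.2 hdη.differentiableAt, Dx_eq u q.1 q.2 hdu.differentiableAt]
    simp [hfunG_def]
  have hHeq : ∀ q : Pn n, dt ρ q.1 q.2 + dive (fun q' => ρ q' • u q') q.1 q.2 = funH q := by
    intro q
    rw [dt_eq ρ q.1 q.2 hdρ.differentiableAt,
      dive_eq _ q.1 q.2 ((hσu.differentiable (by simp)).differentiableAt),
      divC_fderiv_smul ρ u q hdρ.differentiableAt hdu.differentiableAt]
  simp only [hFσ, hGeq, hHeq]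
  rw [dt_eq funF t x ((hF.differentiable (by simp)).differentiableAt),
    dive_eq _ t x (((hF.fun_smul hu0).differentiable (by simp)).differentiableAt),
    dive_eq _ t x (((hρ0.fun_smul hG).differentiable (by simp)).differentiableAt),
    dive_eq _ t x (((hH.fun_smul hη0).differentiable (by simp)).differentiableAt),
    divC_fderiv_smul funF u (t, x) ((hF.differentiable (by simp)).differentiableAt)
      hdu.differentiableAt,
    divC_fderiv_smul ρ funG (t, x) hdρ.differentiableAt
      ((hG.differentiable (by simp)).differentiableAt),
    divC_fderiv_smul funH η (t, x) ((hH.differentiable (by simp)).differentiableAt)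
      hdη.differentiableAt]
  -- expand the derivatives of funF
  have LF1 := dApply ρ η hρ0 hη0 (t, x) (e1 n)
  have LF2 := dApply ρ η hρ0 hη0 (t, x) (iE n (u (t, x)))
  rw [← hfunF_def] at LF1 LF2
  -- expand divC (fderiv funG)
  have LG := divC_fderiv_G u η hu hη (t, x)
  rw [← hfunG_def] at LG
  -- expand fderiv funH applied to iE (η p)
  have hT0d : DifferentiableAt ℝ (fun q => fderiv ℝ ρ q (e1 n)) (t, x) :=
    hdρ'.differentiableAt.clm_apply (differentiableAt_const _)
  have LH : fderiv ℝ funH (t, x) (iE n (η (t, x)))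
      = fderiv ℝ (fderiv ℝ ρ) (t, x) (iE n (η (t, x))) (e1 n)
        + (fderiv ℝ (fderiv ℝ ρ) (t, x) (iE n (η (t, x))) (iE n (u (t, x)))
          + fderiv ℝ ρ (t, x) (iE n (fderiv ℝ u (t, x) (iE n (η (t, x)))))
          + (divC n (fderiv ℝ u (t, x)) * fderiv ℝ ρ (t, x) (iE n (η (t, x)))
          + ρ (t, x) * divC n (fderiv ℝ (fderiv ℝ u) (t, x) (iE n (η (t, x)))))) := by
    rw [hfunH_def, fderiv_fun_add hT0d
      ((hHrest.differentiable (by simp)).differentiableAt),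
      ContinuousLinearMap.add_apply,
      fderiv_clm_const_apply ρ (t, x) hdρ'.differentiableAt (e1 n),
      dApply ρ u hρ0 hu0 (t, x) (iE n (η (t, x)))]
  -- expand fderiv ρ applied to iE (funG p)
  have LG2 : fderiv ℝ ρ (t, x) (iE n (funG (t, x)))
      = fderiv ℝ ρ (t, x) (iE n (fderiv ℝ η (t, x) (e1 n)))
        + (fderiv ℝ ρ (t, x) (iE n (fderiv ℝ η (t, x) (iE n (u (t, x)))))
          - fderiv ℝ ρ (t, x) (iE n (fderiv ℝ u (t, x) (iE n (η (t, x)))))) := by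
    rw [hfunG_def]
    simp only [map_add, map_sub]
  -- values of funF and funH at p
  rw [LF1, LF2, LG, LH, LG2, hfunF_def, hfunH_def]
  have hsymρ := (hρ.contDiffAt (x := (t, x))).isSymmSndFDerivAt (by simp; exact WithTop.coe_le_coe.2 le_top)
  rw [hsymρ (e1 n) (iE n (η (t, x))), hsymρ (iE n (u (t, x))) (iE n (η (t, x)))]
  ring
end
end

section
/- Commutator theorem for covector fields (Theorem 2.2, 1-form case): Let u, η, α : ℝ × E → E be smooth, with α regarded as a covector field identified with a vector field via the Euclidean inner product. Then pointwise on ℝ × E one has ∂t(L_η α) + L_u(L_η α) = L_{∂t η + [u,η]} α + L_η(∂t α + L_u α). -/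
open scoped RealInnerProductSpace
open MeasureTheory
noncomputable section

/-- Lie derivative of a covector field `α` (identified with a vector field via the inner
product) along the time-dependent vector field `w`:
`(L_w α)(t,x) = D_x α(t,x)(w(t,x)) + (D_x w(t,x))ᵀ α(t,x)`. -/
def Lcov {n : ℕ} (w α : ℝ × EuclideanSpace ℝ (Fin n) → EuclideanSpace ℝ (Fin n)) :
    ℝ × EuclideanSpace ℝ (Fin n) → EuclideanSpace ℝ (Fin n) := fun p =>
  Dx α p.1 p.2 (w p) + ContinuousLinearMap.adjoint (Dx w p.1 p.2) (α p)

section Helpers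

variable {n : ℕ}

/-- Inclusion `E → ℝ × E` in the second coordinate, as a CLM. -/
def inrE (n : ℕ) : EuclideanSpace ℝ (Fin n) →L[ℝ] ℝ × EuclideanSpace ℝ (Fin n) :=
  ContinuousLinearMap.inr ℝ ℝ _

/-- Adjoint, as a continuous linear map on endomorphisms of `E`. -/
def adjCLM (n : ℕ) :
    (EuclideanSpace ℝ (Fin n) →L[ℝ] EuclideanSpace ℝ (Fin n)) →L[ℝ]
    (EuclideanSpace ℝ (Fin n) →L[ℝ] EuclideanSpace ℝ (Fin n)) :=
  LinearMap.toContinuousLinearMap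
    { toFun := ContinuousLinearMap.adjoint
      map_add' := fun A B => map_add _ A B
      map_smul' := fun c A => by
        simpa using (ContinuousLinearMap.adjoint (𝕜 := ℝ)).map_smulₛₗ c A }

@[simp] lemma adjCLM_apply (A : EuclideanSpace ℝ (Fin n) →L[ℝ] EuclideanSpace ℝ (Fin n)) :
    adjCLM n A = ContinuousLinearMap.adjoint A := rfl

/-- Precomposition with `inrE`, as a CLM. -/
def pcE (n : ℕ) :
    (ℝ × EuclideanSpace ℝ (Fin n) →L[ℝ] EuclideanSpace ℝ (Fin n)) →L[ℝ]
    (EuclideanSpace ℝ (Fin n) →L[ℝ] EuclideanSpace ℝ (Fin n)) :=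
  (ContinuousLinearMap.compL ℝ (EuclideanSpace ℝ (Fin n)) (ℝ × EuclideanSpace ℝ (Fin n))
    (EuclideanSpace ℝ (Fin n))).flip (inrE n)

@[simp] lemma pcE_apply
    (B : ℝ × EuclideanSpace ℝ (Fin n) →L[ℝ] EuclideanSpace ℝ (Fin n)) :
    pcE n B = B.comp (inrE n) := rfl

/-- Evaluation at `(1,0)`, as a CLM. -/
def evτ (n : ℕ) :
    (ℝ × EuclideanSpace ℝ (Fin n) →L[ℝ] EuclideanSpace ℝ (Fin n)) →L[ℝ]
    EuclideanSpace ℝ (Fin n) :=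
  ContinuousLinearMap.apply ℝ _ ((1 : ℝ), (0 : EuclideanSpace ℝ (Fin n)))

@[simp] lemma evτ_apply
    (B : ℝ × EuclideanSpace ℝ (Fin n) →L[ℝ] EuclideanSpace ℝ (Fin n)) :
    evτ n B = B ((1 : ℝ), 0) := rfl

variable {f : ℝ × EuclideanSpace ℝ (Fin n) → EuclideanSpace ℝ (Fin n)}
  {f' : ℝ × EuclideanSpace ℝ (Fin n) →L[ℝ] EuclideanSpace ℝ (Fin n)}
  {t : ℝ} {x : EuclideanSpace ℝ (Fin n)}

lemma Dx_of (hf : HasFDerivAt f f' (t, x)) : Dx f t x = f'.comp (inrE n) :=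
  (hf.comp x (hasFDerivAt_prodMk_right t x)).fderiv

lemma dt_of (hf : HasFDerivAt f f' (t, x)) : dt f t x = f' ((1 : ℝ), 0) :=
  (hf.comp_hasDerivAt t ((hasDerivAt_id t).prodMk (hasDerivAt_const t x))).deriv

lemma hasFDerivAt_of_contDiff (hf : ContDiff ℝ (⊤ : ℕ∞) f) (q : ℝ × EuclideanSpace ℝ (Fin n)) :
    HasFDerivAt f (fderiv ℝ f q) q :=
  (hf.differentiable (by simp) q).hasFDerivAt

lemma hasFDerivAt_fderiv (hf : ContDiff ℝ (⊤ : ℕ∞) f) (q : ℝ × EuclideanSpace ℝ (Fin n)) :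
    HasFDerivAt (fderiv ℝ f) (fderiv ℝ (fderiv ℝ f) q) q :=
  ((hf.fderiv_right (m := 1) (by exact WithTop.coe_le_coe.mpr le_top)).differentiable one_ne_zero q).hasFDerivAt

lemma snd_symm (hf : ContDiff ℝ (⊤ : ℕ∞) f) (q : ℝ × EuclideanSpace ℝ (Fin n)) (z z' : ℝ × EuclideanSpace ℝ (Fin n)) :
    fderiv ℝ (fderiv ℝ f) q z z' = fderiv ℝ (fderiv ℝ f) q z' z :=
  second_derivative_symmetric (hasFDerivAt_of_contDiff hf) (hasFDerivAt_fderiv hf q) z z'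

/-- Full derivative of the spatial-derivative field `p ↦ Dx f p.1 p.2`. -/
lemma hasFDerivAt_DxField (hf : ContDiff ℝ (⊤ : ℕ∞) f) (q : ℝ × EuclideanSpace ℝ (Fin n)) :
    HasFDerivAt (fun p : ℝ × EuclideanSpace ℝ (Fin n) => Dx f p.1 p.2)
      ((pcE n).comp (fderiv ℝ (fderiv ℝ f) q)) q := by
  have : (fun p : ℝ × EuclideanSpace ℝ (Fin n) => Dx f p.1 p.2)
      = fun p => pcE n (fderiv ℝ f p) := by
    funext p
    simp only [pcE_apply]
    exact Dx_of (hasFDerivAt_of_contDiff hf p)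
  rw [this]
  exact (pcE n).hasFDerivAt.comp q (hasFDerivAt_fderiv hf q)

/-- Full derivative of the time-derivative field `p ↦ dt f p.1 p.2`. -/
lemma hasFDerivAt_dtField (hf : ContDiff ℝ (⊤ : ℕ∞) f) (q : ℝ × EuclideanSpace ℝ (Fin n)) :
    HasFDerivAt (fun p : ℝ × EuclideanSpace ℝ (Fin n) => dt f p.1 p.2)
      ((evτ n).comp (fderiv ℝ (fderiv ℝ f) q)) q := by
  have : (fun p : ℝ × EuclideanSpace ℝ (Fin n) => dt f p.1 p.2)
      = fun p => evτ n (fderiv ℝ f p) := by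
    funext p
    simp only [evτ_apply]
    exact dt_of (hasFDerivAt_of_contDiff hf p)
  rw [this]
  exact (evτ n).hasFDerivAt.comp q (hasFDerivAt_fderiv hf q)

end Helpers

set_option maxHeartbeats 2000000

/-- Commutator theorem for covector fields (Theorem 2.2, 1-form case):
`∂ₜ(L_η α) + L_u(L_η α) = L_{∂ₜη + [u,η]} α + L_η(∂ₜ α + L_u α)`. -/
theorem commutator_covector {n : ℕ} (hn : 1 ≤ n)
    (u η α : ℝ × EuclideanSpace ℝ (Fin n) → EuclideanSpace ℝ (Fin n))
    (hu : ContDiff ℝ (⊤ : ℕ∞) u) (hη : ContDiff ℝ (⊤ : ℕ∞) η) (hα : ContDiff ℝ (⊤ : ℕ∞) α) :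
    ∀ (t : ℝ) (x : EuclideanSpace ℝ (Fin n)),
      dt (Lcov η α) t x + Lcov u (Lcov η α) (t, x)
      = Lcov (fun p => dt η p.1 p.2 + bracket u η p.1 p.2) α (t, x)
        + Lcov η (fun p => dt α p.1 p.2 + Lcov u α p) (t, x) := by
  intro t x
  set p : ℝ × EuclideanSpace ℝ (Fin n) := (t, x) with hp
  -- first derivatives at p
  set A := fderiv ℝ α p with hA
  set H := fderiv ℝ η p with hH
  set U := fderiv ℝ u p with hU
  -- second derivatives at p
  set A2 := fderiv ℝ (fderiv ℝ α) p with hA2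
  set H2 := fderiv ℝ (fderiv ℝ η) p with hH2
  set U2 := fderiv ℝ (fderiv ℝ u) p with hU2
  have hα' := hasFDerivAt_of_contDiff hα p
  have hη' := hasFDerivAt_of_contDiff hη p
  have hu' := hasFDerivAt_of_contDiff hu p
  -- derivative of L_η α
  have h1 : HasFDerivAt (Lcov η α)
      (((Dx α t x).comp H + ((pcE n).comp A2).flip (η p))
        + ((adjCLM n (Dx η t x)).comp A + ((adjCLM n).comp ((pcE n).comp H2)).flip (α p)))
      p :=
    ((hasFDerivAt_DxField hα p).clm_apply hη').add
      ((((adjCLM n).hasFDerivAt.comp p (hasFDerivAt_DxField hη p)).clm_apply hα'))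
  -- derivative of ∂ₜη + [u,η]
  have hg : HasFDerivAt
      (fun q : ℝ × EuclideanSpace ℝ (Fin n) => dt η q.1 q.2 + bracket u η q.1 q.2)
      (((evτ n).comp H2)
        + (((Dx η t x).comp U + ((pcE n).comp H2).flip (u p))
          - ((Dx u t x).comp H + ((pcE n).comp U2).flip (η p))))
      p :=
    (hasFDerivAt_dtField hη p).add
      (((hasFDerivAt_DxField hη p).clm_apply hu').sub
        ((hasFDerivAt_DxField hu p).clm_apply hη'))
  -- derivative of ∂ₜα + L_u α
  have hβ : HasFDerivAt
      (fun q : ℝ × EuclideanSpace ℝ (Fin n) => dt α q.1 q.2 + Lcov u α q)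
      (((evτ n).comp A2)
        + (((Dx α t x).comp U + ((pcE n).comp A2).flip (u p))
          + ((adjCLM n (Dx u t x)).comp A + ((adjCLM n).comp ((pcE n).comp U2)).flip (α p))))
      p :=
    (hasFDerivAt_dtField hα p).add
      (((hasFDerivAt_DxField hα p).clm_apply hu').add
        ((((adjCLM n).hasFDerivAt.comp p (hasFDerivAt_DxField hu p)).clm_apply hα')))
  -- rewrite everything in the goal
  have eDxα : Dx α t x = A.comp (inrE n) := Dx_of hα'
  have eDxη : Dx η t x = H.comp (inrE n) := Dx_of hη'
  have eDxu : Dx u t x = U.comp (inrE n) := Dx_of hu'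
  have edtη : dt η t x = H ((1 : ℝ), 0) := dt_of hη'
  have edtα : dt α t x = A ((1 : ℝ), 0) := dt_of hα'
  have symα := snd_symm hα p
  have symη := snd_symm hη p
  have symu := snd_symm hu p
  have eq1 : Lcov u (Lcov η α) p
      = Dx (Lcov η α) t x (u p) + ContinuousLinearMap.adjoint (Dx u t x) (Lcov η α p) := rfl
  have eqLηα : Lcov η α p
      = Dx α t x (η p) + ContinuousLinearMap.adjoint (Dx η t x) (α p) := rfl
  have eq2 : Lcov (fun q => dt η q.1 q.2 + bracket u η q.1 q.2) α p
      = Dx α t x (dt η t x + (Dx η t x (u p) - Dx u t x (η p)))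
        + ContinuousLinearMap.adjoint
            (Dx (fun q => dt η q.1 q.2 + bracket u η q.1 q.2) t x) (α p) := rfl
  have eq3 : Lcov η (fun q => dt α q.1 q.2 + Lcov u α q) p
      = Dx (fun q => dt α q.1 q.2 + Lcov u α q) t x (η p)
        + ContinuousLinearMap.adjoint (Dx η t x)
            (dt α t x + (Dx α t x (u p) + ContinuousLinearMap.adjoint (Dx u t x) (α p))) := rfl
  rw [eq1, eqLηα, eq2, eq3, dt_of h1, Dx_of h1, Dx_of hg, Dx_of hβ,
    eDxα, eDxη, eDxu, edtη, edtα]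
  refine ext_inner_right ℝ fun ξ => ?_
  simp only [ContinuousLinearMap.add_apply, ContinuousLinearMap.sub_apply,
    ContinuousLinearMap.comp_apply, ContinuousLinearMap.flip_apply, pcE_apply, evτ_apply,
    adjCLM_apply, ContinuousLinearMap.adjoint_inner_left, inner_add_left, inner_sub_left,
    map_add, map_sub, inner_add_right, inner_sub_right]
  rw [← hA2] at symα
  rw [← hH2] at symη
  rw [← hU2] at symu
  rw [symα ((1:ℝ), (0:EuclideanSpace ℝ (Fin n))) (inrE n (η p)),
    symα (inrE n (u p)) (inrE n (η p)),
    symη ((1:ℝ), (0:EuclideanSpace ℝ (Fin n))) (inrE n ξ),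
    symη (inrE n (u p)) (inrE n ξ),
    symu (inrE n (η p)) (inrE n ξ)]
  ring
end
end

section
/- Ertel theorem, scalar case (Theorem 2.3): Let u, η : ℝ × E → E and a : ℝ × E → ℝ be smooth. Assume a is advected, i.e. ∂t a(t,x) + D_x a(t,x)(u(t,x)) = 0 for all (t,x), and η satisfies the relabelling-symmetry equation ∂t η + [u,η] = 0 everywhere. Then the scalar field q(t,x) := D_x a(t,x)(η(t,x)) is also advected: ∂t q(t,x) + D_x q(t,x)(u(t,x)) = 0 for all (t,x). -/
open scoped RealInnerProductSpace
open MeasureTheory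
noncomputable section

section ErtelAux
variable {n : ℕ} {F : Type*} [NormedAddCommGroup F] [NormedSpace ℝ F]

lemma Dx_apply (w : ℝ × EuclideanSpace ℝ (Fin n) → F) {t : ℝ} {x : EuclideanSpace ℝ (Fin n)}
    (hw : DifferentiableAt ℝ w (t, x)) (v : EuclideanSpace ℝ (Fin n)) :
    Dx w t x v = fderiv ℝ w (t, x) (0, v) := by
  have h1 : HasFDerivAt (fun y : EuclideanSpace ℝ (Fin n) => ((t, y) : ℝ × EuclideanSpace ℝ (Fin n)))
      (ContinuousLinearMap.inr ℝ ℝ (EuclideanSpace ℝ (Fin n))) x :=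
    hasFDerivAt_prodMk_right t x
  have h2 := (hw.hasFDerivAt.comp x h1)
  have h3 : Dx w t x = (fderiv ℝ w (t, x)).comp (ContinuousLinearMap.inr ℝ ℝ (EuclideanSpace ℝ (Fin n))) := by
    simpa [Dx, Function.comp_def] using h2.fderiv
  rw [h3]; rfl

lemma dt_apply (w : ℝ × EuclideanSpace ℝ (Fin n) → F) {t : ℝ} {x : EuclideanSpace ℝ (Fin n)}
    (hw : DifferentiableAt ℝ w (t, x)) :
    dt w t x = fderiv ℝ w (t, x) (1, 0) := by
  have h1 : HasDerivAt (fun τ : ℝ => ((τ, x) : ℝ × EuclideanSpace ℝ (Fin n))) (1, 0) t :=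
    (hasDerivAt_id t).prodMk (hasDerivAt_const t x)
  have h2 := hw.hasFDerivAt.comp_hasDerivAt t h1
  simpa [dt, Function.comp_def] using h2.deriv

end ErtelAux

/-- Ertel theorem, scalar case (Theorem 2.3): if `a` is advected and `η` satisfies the
relabelling-symmetry equation `∂ₜη + [u,η] = 0`, then `q = D_x a (η)` is also advected. -/
theorem ertel_scalar {n : ℕ} (hn : 1 ≤ n)
    (u η : ℝ × EuclideanSpace ℝ (Fin n) → EuclideanSpace ℝ (Fin n))
    (a : ℝ × EuclideanSpace ℝ (Fin n) → ℝ)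
    (hu : ContDiff ℝ (⊤ : ℕ∞) u) (hη : ContDiff ℝ (⊤ : ℕ∞) η) (ha : ContDiff ℝ (⊤ : ℕ∞) a)
    (hadv : ∀ (t : ℝ) (x : EuclideanSpace ℝ (Fin n)), dt a t x + Dx a t x (u (t, x)) = 0)
    (hsym : ∀ (t : ℝ) (x : EuclideanSpace ℝ (Fin n)), dt η t x + bracket u η t x = 0) :
    ∀ (t : ℝ) (x : EuclideanSpace ℝ (Fin n)),
      dt (fun p => Dx a p.1 p.2 (η p)) t x
        + Dx (fun p => Dx a p.1 p.2 (η p)) t x (u (t, x)) = 0 := by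
  have had : Differentiable ℝ a := ha.differentiable (by simp)
  have hud : Differentiable ℝ u := hu.differentiable (by simp)
  have hηd : Differentiable ℝ η := hη.differentiable (by simp)
  have hA : ContDiff ℝ (⊤ : ℕ∞) (fderiv ℝ a) := ha.fderiv_right (by simp)
  have hAd : Differentiable ℝ (fderiv ℝ a) := hA.differentiable (by simp)
  have hqeq : (fun p : ℝ × EuclideanSpace ℝ (Fin n) => Dx a p.1 p.2 (η p))
      = fun p => fderiv ℝ a p ((0 : ℝ), η p) := by
    funext p
    exact Dx_apply a (had (p.1, p.2)) (η p)
  have hqd : Differentiable ℝ (fun p : ℝ × EuclideanSpace ℝ (Fin n) => fderiv ℝ a p ((0 : ℝ), η p)) :=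
    hAd.clm_apply ((differentiable_const (0:ℝ)).prodMk hηd)
  intro t x
  set p : ℝ × EuclideanSpace ℝ (Fin n) := (t, x) with hp
  have hηv : Differentiable ℝ (fun q : ℝ × EuclideanSpace ℝ (Fin n) => (((0:ℝ), η q) : ℝ × EuclideanSpace ℝ (Fin n))) :=
    (differentiable_const (0:ℝ)).prodMk hηd
  have hfq : fderiv ℝ (fun q => fderiv ℝ a q ((0 : ℝ), η q)) p
      = (fderiv ℝ a p).comp (fderiv ℝ (fun q : ℝ × EuclideanSpace ℝ (Fin n) => (((0:ℝ), η q) : ℝ × EuclideanSpace ℝ (Fin n))) p)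
        + (fderiv ℝ (fderiv ℝ a) p).flip ((0:ℝ), η p) :=
    fderiv_clm_apply (hAd p) (hηv p)
  have hηv' : fderiv ℝ (fun q : ℝ × EuclideanSpace ℝ (Fin n) => (((0:ℝ), η q) : ℝ × EuclideanSpace ℝ (Fin n))) p
      = (0 : (ℝ × EuclideanSpace ℝ (Fin n)) →L[ℝ] ℝ).prod (fderiv ℝ η p) :=
    ((hasFDerivAt_const (0:ℝ) p).prodMk (hηd p).hasFDerivAt).fderiv
  have hadv' : ∀ q : ℝ × EuclideanSpace ℝ (Fin n), fderiv ℝ a q ((1:ℝ), u q) = 0 := by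
    intro q
    have h1 := hadv q.1 q.2
    rw [dt_apply a (had (q.1, q.2)), Dx_apply a (had (q.1, q.2))] at h1
    have h2 : (((1:ℝ), u q) : ℝ × EuclideanSpace ℝ (Fin n))
        = (((1:ℝ), (0:EuclideanSpace ℝ (Fin n))) : ℝ × EuclideanSpace ℝ (Fin n)) + ((0:ℝ), u q) := by
      simp
    rw [h2, map_add]
    simpa using h1
  have huv : Differentiable ℝ (fun q : ℝ × EuclideanSpace ℝ (Fin n) => (((1:ℝ), u q) : ℝ × EuclideanSpace ℝ (Fin n))) :=
    (differentiable_const (1:ℝ)).prodMk hud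
  have hg : fderiv ℝ (fun q : ℝ × EuclideanSpace ℝ (Fin n) => fderiv ℝ a q ((1:ℝ), u q)) p = 0 := by
    have h1 : (fun q : ℝ × EuclideanSpace ℝ (Fin n) => fderiv ℝ a q ((1:ℝ), u q)) = fun _ => (0:ℝ) :=
      funext hadv'
    rw [h1]; exact fderiv_const_apply 0
  have hfg : fderiv ℝ (fun q : ℝ × EuclideanSpace ℝ (Fin n) => fderiv ℝ a q ((1:ℝ), u q)) p
      = (fderiv ℝ a p).comp (fderiv ℝ (fun q : ℝ × EuclideanSpace ℝ (Fin n) => (((1:ℝ), u q) : ℝ × EuclideanSpace ℝ (Fin n))) p)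
        + (fderiv ℝ (fderiv ℝ a) p).flip ((1:ℝ), u p) :=
    fderiv_clm_apply (hAd p) (huv p)
  have huv' : fderiv ℝ (fun q : ℝ × EuclideanSpace ℝ (Fin n) => (((1:ℝ), u q) : ℝ × EuclideanSpace ℝ (Fin n))) p
      = (0 : (ℝ × EuclideanSpace ℝ (Fin n)) →L[ℝ] ℝ).prod (fderiv ℝ u p) :=
    ((hasFDerivAt_const (1:ℝ) p).prodMk (hud p).hasFDerivAt).fderiv
  have hkey : fderiv ℝ (fderiv ℝ a) p ((0:ℝ), η p) ((1:ℝ), u p)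
      + fderiv ℝ a p ((0:ℝ), fderiv ℝ u p ((0:ℝ), η p)) = 0 := by
    have h0 := congrArg (fun L : (ℝ × EuclideanSpace ℝ (Fin n)) →L[ℝ] ℝ =>
      L (((0:ℝ), η p) : ℝ × EuclideanSpace ℝ (Fin n))) hfg
    rw [hg] at h0
    have h1 := h0.symm
    simpa [huv', ContinuousLinearMap.flip_apply, add_comm] using h1
  have hsymm : ∀ v w : ℝ × EuclideanSpace ℝ (Fin n),
      fderiv ℝ (fderiv ℝ a) p v w = fderiv ℝ (fderiv ℝ a) p w v :=
    second_derivative_symmetric (fun y => (had y).hasFDerivAt) (hAd p).hasFDerivAt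
  have hsym' : fderiv ℝ η p ((1:ℝ), u p) = fderiv ℝ u p ((0:ℝ), η p) := by
    have h1 := hsym t x
    rw [bracket, dt_apply η (hηd p), Dx_apply η (hηd p), Dx_apply u (hud p)] at h1
    rw [← add_sub_assoc] at h1
    have h3 := sub_eq_zero.mp h1
    have h2 : (((1:ℝ), u p) : ℝ × EuclideanSpace ℝ (Fin n))
        = (((1:ℝ), (0:EuclideanSpace ℝ (Fin n))) : ℝ × EuclideanSpace ℝ (Fin n)) + ((0:ℝ), u p) := by
      simp
    rw [h2, map_add]
    simpa using h3
  rw [hqeq, dt_apply _ (hqd p), Dx_apply _ (hqd p), ← map_add]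
  have h2 : (((1:ℝ), (0:EuclideanSpace ℝ (Fin n))) : ℝ × EuclideanSpace ℝ (Fin n)) + ((0:ℝ), u (t, x))
      = (((1:ℝ), u p) : ℝ × EuclideanSpace ℝ (Fin n)) := by simp [hp]
  rw [h2, hfq]
  simp only [ContinuousLinearMap.add_apply, ContinuousLinearMap.coe_comp', Function.comp_apply,
    ContinuousLinearMap.flip_apply, hηv']
  have h4 : ((0 : (ℝ × EuclideanSpace ℝ (Fin n)) →L[ℝ] ℝ).prod (fderiv ℝ η p)) ((1:ℝ), u p)
      = (((0:ℝ), fderiv ℝ η p ((1:ℝ), u p)) : ℝ × EuclideanSpace ℝ (Fin n)) := rfl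
  rw [h4, hsym', hsymm ((1:ℝ), u p) ((0:ℝ), η p)]
  linarith [hkey]
end
end

section
/- Pointwise Noether identity for the momentum pairing: Let u, η, m : ℝ × E → E be smooth, and assume η satisfies the relabelling-symmetry equation ∂t η + [u,η] = 0 everywhere. Then pointwise on ℝ × E one has ∂t⟪m,η⟫ + div(⟪m,η⟫·u) = ⟪∂t m + D_x m(u) + (div u)·m + (D_x u)ᵀ m, η⟫, where the right-hand bracket applies the Euler–Poincaré operator ∂t + ad*_u (the Lie derivative of the one-form density m·dx ⊗ dV) to m. -/
open scoped RealInnerProductSpace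
open MeasureTheory
noncomputable section

/-- Trace of a rank-one map `y ↦ c y • v` equals `c v`. -/
lemma trace_smulRight_aux {n : ℕ} (c : EuclideanSpace ℝ (Fin n) →ₗ[ℝ] ℝ)
    (v : EuclideanSpace ℝ (Fin n)) :
    LinearMap.trace ℝ (EuclideanSpace ℝ (Fin n)) (c.smulRight v) = c v := by
  have h : c.smulRight v = dualTensorHom ℝ (EuclideanSpace ℝ (Fin n))
      (EuclideanSpace ℝ (Fin n)) (c ⊗ₜ v) := by
    ext y; simp
  rw [h, LinearMap.trace_eq_contract_apply, contractLeft_apply]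

/-- Spatial derivative as a `HasFDerivAt` statement. -/
lemma hasFDerivAt_Dx {n : ℕ} {F : Type*} [NormedAddCommGroup F] [NormedSpace ℝ F]
    (w : ℝ × EuclideanSpace ℝ (Fin n) → F) (hw : ContDiff ℝ (⊤ : ℕ∞) w) (t : ℝ)
    (x : EuclideanSpace ℝ (Fin n)) :
    HasFDerivAt (fun y => w (t, y)) (Dx w t x) x := by
  have hd : DifferentiableAt ℝ (fun y : EuclideanSpace ℝ (Fin n) => w (t, y)) x :=
    ((hw.differentiable (by simp)) (t, x)).comp x
      ((differentiableAt_const t).prodMk differentiableAt_id)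
  exact hd.hasFDerivAt

/-- Time derivative as a `HasDerivAt` statement. -/
lemma hasDerivAt_dt {n : ℕ} {F : Type*} [NormedAddCommGroup F] [NormedSpace ℝ F]
    (w : ℝ × EuclideanSpace ℝ (Fin n) → F) (hw : ContDiff ℝ (⊤ : ℕ∞) w) (t : ℝ)
    (x : EuclideanSpace ℝ (Fin n)) :
    HasDerivAt (fun τ => w (τ, x)) (dt w t x) t := by
  have hd : DifferentiableAt ℝ (fun τ : ℝ => w (τ, x)) t :=
    ((hw.differentiable (by simp)) (t, x)).comp t
      (differentiableAt_id.prodMk (differentiableAt_const x))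
  exact hd.hasDerivAt

/-- Pointwise Noether identity for the momentum pairing: if `η` is a relabelling symmetry,
then `∂ₜ⟪m,η⟫ + div(⟪m,η⟫ u) = ⟪(∂ₜ + ad*_u) m, η⟫`. -/
theorem noether_pointwise {n : ℕ} (hn : 1 ≤ n)
    (u η m : ℝ × EuclideanSpace ℝ (Fin n) → EuclideanSpace ℝ (Fin n))
    (hu : ContDiff ℝ (⊤ : ℕ∞) u) (hη : ContDiff ℝ (⊤ : ℕ∞) η) (hm : ContDiff ℝ (⊤ : ℕ∞) m)
    (hsym : ∀ (t : ℝ) (x : EuclideanSpace ℝ (Fin n)), dt η t x + bracket u η t x = 0) :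
    ∀ (t : ℝ) (x : EuclideanSpace ℝ (Fin n)),
      dt (fun p => ⟪m p, η p⟫) t x + dive (fun p => ⟪m p, η p⟫ • u p) t x
      = ⟪dt m t x + Dx m t x (u (t, x)) + dive u t x • m (t, x)
          + ContinuousLinearMap.adjoint (Dx u t x) (m (t, x)), η (t, x)⟫ := by
  intro t x
  have hmx := hasFDerivAt_Dx m hm t x
  have hηx := hasFDerivAt_Dx η hη t x
  have hux := hasFDerivAt_Dx u hu t x
  have hmt := hasDerivAt_dt m hm t x
  have hηt := hasDerivAt_dt η hη t x
  -- Step A: time derivative of the pairing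
  have hA : dt (fun p => ⟪m p, η p⟫) t x
      = ⟪m (t, x), dt η t x⟫ + ⟪dt m t x, η (t, x)⟫ := by
    have := (hmt.inner ℝ hηt).deriv
    simpa [dt] using this
  -- Step B: spatial divergence of the pairing times u
  set c' := ((fderivInnerCLM ℝ (m (t, x), η (t, x))).comp
      ((Dx m t x).prod (Dx η t x))) with hc'
  have hinner : HasFDerivAt (fun y => ⟪m (t, y), η (t, y)⟫) c' x := hmx.inner ℝ hηx
  have hprod : HasFDerivAt
      (fun y => (⟪m (t, y), η (t, y)⟫ : ℝ) • u (t, y))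
      ((⟪m (t, x), η (t, x)⟫ : ℝ) • Dx u t x + c'.smulRight (u (t, x))) x :=
    hinner.smul hux
  have hDxEq : Dx (fun p => ⟪m p, η p⟫ • u p) t x
      = (⟪m (t, x), η (t, x)⟫ : ℝ) • Dx u t x + c'.smulRight (u (t, x)) := by
    simpa [Dx] using hprod.fderiv
  have hB : dive (fun p => ⟪m p, η p⟫ • u p) t x
      = ⟪m (t, x), η (t, x)⟫ * dive u t x + c' (u (t, x)) := by
    have e1 : (((⟪m (t, x), η (t, x)⟫ : ℝ) • Dx u t x + (c'.smulRight (u (t, x))) :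
        EuclideanSpace ℝ (Fin n) →L[ℝ] EuclideanSpace ℝ (Fin n)) :
        EuclideanSpace ℝ (Fin n) →ₗ[ℝ] EuclideanSpace ℝ (Fin n))
        = (⟪m (t, x), η (t, x)⟫ : ℝ) • ((Dx u t x :
            EuclideanSpace ℝ (Fin n) →ₗ[ℝ] EuclideanSpace ℝ (Fin n)))
          + (c' : EuclideanSpace ℝ (Fin n) →ₗ[ℝ] ℝ).smulRight (u (t, x)) := rfl
    rw [dive, hDxEq, e1, map_add, _root_.map_smul, trace_smulRight_aux]
    simp [dive, smul_eq_mul]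
  have hc'app : c' (u (t, x))
      = ⟪m (t, x), Dx η t x (u (t, x))⟫ + ⟪Dx m t x (u (t, x)), η (t, x)⟫ := by
    simp [hc', fderivInnerCLM]
  -- symmetry equation
  have hs : dt η t x = Dx u t x (η (t, x)) - Dx η t x (u (t, x)) := by
    have := hsym t x
    rw [bracket] at this
    have h' := congrArg (fun z => z - (Dx η t x (u (t, x)) - Dx u t x (η (t, x)))) this
    simpa [add_sub_cancel_right] using h'
  rw [hA, hB, hc'app, hs]
  rw [inner_add_left, inner_add_left, inner_add_left, inner_sub_right,
    inner_smul_left, ContinuousLinearMap.adjoint_inner_left]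
  have h1 : (⟪m (t, x), Dx u t x (η (t, x))⟫ : ℝ) = ⟪Dx u t x (η (t, x)), m (t, x)⟫ :=
    real_inner_comm _ _
  have h2 : (⟪m (t, x), η (t, x)⟫ : ℝ) = ⟪η (t, x), m (t, x)⟫ := real_inner_comm _ _
  have h3 : (⟪m (t, x), Dx η t x (u (t, x))⟫ : ℝ) = ⟪Dx η t x (u (t, x)), m (t, x)⟫ :=
    real_inner_comm _ _
  simp only [inner_sub_left, real_inner_comm (m (t,x)), RCLike.star_def, starRingEnd_apply,
    star_trivial]
  ring
end
end

section
/- Noether's theorem for EPDiff (Theorem 2.1, no advected quantities): Let u, η, m : ℝ × E → E be smooth. Assume (i) η satisfies the relabelling-symmetry equation ∂t η + [u,η] = 0 everywhere; (ii) m satisfies the EPDiff momentum equation ∂t m + D_x m(u) + (div u)·m + (D_x u)ᵀ m = 0 everywhere; and (iii) there is a compact set K ⊆ E with m(t,x) = 0 whenever x ∉ K. Then the Noether integral t ↦ ∫_E ⟪m(t,x), η(t,x)⟫ dx is constant in t. -/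
open scoped RealInnerProductSpace
open MeasureTheory
noncomputable section

/-- trace of a rank-one map `x ↦ φ(x) • v` is `φ v`. -/
lemma trace_smulRight' {n : ℕ} (φ : EuclideanSpace ℝ (Fin n) →L[ℝ] ℝ)
    (v : EuclideanSpace ℝ (Fin n)) :
    LinearMap.trace ℝ _ ((φ.smulRight v : EuclideanSpace ℝ (Fin n) →L[ℝ] EuclideanSpace ℝ (Fin n))
      : EuclideanSpace ℝ (Fin n) →ₗ[ℝ] EuclideanSpace ℝ (Fin n)) = φ v := by
  have h1 : ((φ.smulRight v : EuclideanSpace ℝ (Fin n) →L[ℝ] EuclideanSpace ℝ (Fin n))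
      : EuclideanSpace ℝ (Fin n) →ₗ[ℝ] EuclideanSpace ℝ (Fin n))
      = (LinearMap.toSpanSingleton ℝ _ v).comp (φ : EuclideanSpace ℝ (Fin n) →ₗ[ℝ] ℝ) := by
    ext x; rfl
  rw [h1, LinearMap.trace_comp_comm']
  have h2 : (φ : EuclideanSpace ℝ (Fin n) →ₗ[ℝ] ℝ).comp (LinearMap.toSpanSingleton ℝ _ v)
      = φ v • LinearMap.id := by
    ext
    simp [LinearMap.toSpanSingleton, LinearMap.smulRight, mul_comm]
  rw [h2, LinearMap.map_smul, LinearMap.trace_id, smul_eq_mul]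
  simp

lemma trace_pi_sum {N : ℕ} (A : (Fin (N+1) → ℝ) →ₗ[ℝ] (Fin (N+1) → ℝ)) :
    LinearMap.trace ℝ _ A = ∑ i, A (Pi.single i 1) i := by
  rw [LinearMap.trace_eq_matrix_trace ℝ (Pi.basisFun ℝ (Fin (N+1))) A, Matrix.trace]
  refine Finset.sum_congr rfl fun i _ => ?_
  simp [Matrix.diag, LinearMap.toMatrix_apply]

/-- The integral of the divergence of a compactly supported `C¹` vector field vanishes. -/
lemma integral_div_eq_zero {N : ℕ}
    (w : EuclideanSpace ℝ (Fin (N+1)) → EuclideanSpace ℝ (Fin (N+1)))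
    (hw : ContDiff ℝ 1 w) {K : Set (EuclideanSpace ℝ (Fin (N+1)))} (hK : IsCompact K)
    (h0 : ∀ x ∉ K, w x = 0) :
    ∫ x, LinearMap.trace ℝ _
      ((fderiv ℝ w x : EuclideanSpace ℝ (Fin (N+1)) →L[ℝ] EuclideanSpace ℝ (Fin (N+1)))
        : EuclideanSpace ℝ (Fin (N+1)) →ₗ[ℝ] EuclideanSpace ℝ (Fin (N+1))) = 0 := by
  set dv : EuclideanSpace ℝ (Fin (N+1)) → ℝ := fun x => LinearMap.trace ℝ _
      ((fderiv ℝ w x : EuclideanSpace ℝ (Fin (N+1)) →L[ℝ] EuclideanSpace ℝ (Fin (N+1)))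
        : EuclideanSpace ℝ (Fin (N+1)) →ₗ[ℝ] EuclideanSpace ℝ (Fin (N+1))) with hdv
  -- dv vanishes off K
  have hdv0 : ∀ x, x ∉ K → dv x = 0 := by
    intro x hx
    have hopen : IsOpen Kᶜ := hK.isClosed.isOpen_compl
    have hev : w =ᶠ[nhds x] (fun _ => (0 : EuclideanSpace ℝ (Fin (N+1)))) :=
      Filter.eventuallyEq_iff_exists_mem.2 ⟨Kᶜ, hopen.mem_nhds hx, fun y hy => h0 y hy⟩
    have : fderiv ℝ w x = fderiv ℝ (fun _ => (0 : EuclideanSpace ℝ (Fin (N+1)))) x :=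
      hev.fderiv_eq
    simp [hdv, this]
  -- dv is continuous
  have hdvc : Continuous dv := by
    haveI : T2Space (EuclideanSpace ℝ (Fin (N+1)) →L[ℝ] EuclideanSpace ℝ (Fin (N+1))) := inferInstance
    have h := (LinearMap.continuous_of_finiteDimensional
      ((LinearMap.trace ℝ (EuclideanSpace ℝ (Fin (N+1)))).comp
        (ContinuousLinearMap.coeLM ℝ))).comp (hw.continuous_fderiv one_ne_zero)
    exact h
  set eL := EuclideanSpace.equiv (Fin (N+1)) ℝ with heL
  -- radius
  obtain ⟨r, hr⟩ := (hK.image eL.continuous).isBounded.subset_ball 0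
  set R := max r 1 with hR
  have hRpos : (0:ℝ) < R := lt_of_lt_of_le one_pos (le_max_right _ _)
  have hKR : ∀ x ∈ K, ‖eL x‖ < R := by
    intro x hx
    have h1 := hr ⟨x, hx, rfl⟩
    calc ‖eL x‖ < r := by simpa [Metric.mem_ball] using h1
    _ ≤ R := le_max_left _ _
  set a : Fin (N+1) → ℝ := fun _ => -R with ha
  set b : Fin (N+1) → ℝ := fun _ => R with hb
  have hle : a ≤ b := fun i => by simp only [ha, hb]; linarith
  set W : (Fin (N+1) → ℝ) → (Fin (N+1) → ℝ) := fun z => eL (w (eL.symm z)) with hWdef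
  set W' : (Fin (N+1) → ℝ) → (Fin (N+1) → ℝ) →L[ℝ] (Fin (N+1) → ℝ) := fun z =>
    ((eL : EuclideanSpace ℝ (Fin (N+1)) →L[ℝ] (Fin (N+1) → ℝ)).comp
      (fderiv ℝ w (eL.symm z))).comp
        (eL.symm : (Fin (N+1) → ℝ) →L[ℝ] EuclideanSpace ℝ (Fin (N+1))) with hW'
  have hWd : ∀ z, HasFDerivAt W (W' z) z := by
    intro z
    have h1 : HasFDerivAt w (fderiv ℝ w (eL.symm z)) (eL.symm z) :=
      ((hw.differentiable one_ne_zero) _).hasFDerivAt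
    have h2 : HasFDerivAt (fun z => w (eL.symm z))
        ((fderiv ℝ w (eL.symm z)).comp
          (eL.symm : (Fin (N+1) → ℝ) →L[ℝ] EuclideanSpace ℝ (Fin (N+1)))) z :=
      h1.comp z (eL.symm.hasFDerivAt)
    have h3 := ((eL : EuclideanSpace ℝ (Fin (N+1)) →L[ℝ] (Fin (N+1) → ℝ)).hasFDerivAt).comp z h2
    simpa [hW', ContinuousLinearMap.comp_assoc] using h3
  -- trace identity
  have htr : ∀ z, (∑ i, W' z (Pi.single i 1) i) = dv (eL.symm z) := by
    intro z
    have hconj : ((W' z : (Fin (N+1) → ℝ) →L[ℝ] (Fin (N+1) → ℝ))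
        : (Fin (N+1) → ℝ) →ₗ[ℝ] (Fin (N+1) → ℝ))
        = (eL.toLinearEquiv).conj
          ((fderiv ℝ w (eL.symm z) : EuclideanSpace ℝ (Fin (N+1)) →L[ℝ] EuclideanSpace ℝ (Fin (N+1)))
            : EuclideanSpace ℝ (Fin (N+1)) →ₗ[ℝ] EuclideanSpace ℝ (Fin (N+1))) := by
      ext x
      simp [hW', LinearEquiv.conj_apply]
    calc (∑ i, W' z (Pi.single i 1) i)
        = LinearMap.trace ℝ _ ((W' z : (Fin (N+1) → ℝ) →L[ℝ] (Fin (N+1) → ℝ))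
          : (Fin (N+1) → ℝ) →ₗ[ℝ] (Fin (N+1) → ℝ)) := (trace_pi_sum _).symm
      _ = dv (eL.symm z) := by rw [hconj]; exact LinearMap.trace_conj' _ _
  -- side condition: points with i-th coordinate ±R are outside K
  have hface : ∀ (p : Fin (N+1) → ℝ) (i : Fin (N+1)), |p i| = R → w (eL.symm p) = 0 := by
    intro p i hpi
    by_contra hne
    have hmem : eL.symm p ∈ K := by
      by_contra hmem
      exact hne (h0 _ hmem)
    have h1 : ‖p‖ < R := by
      have := hKR _ hmem
      simpa using this
    have h2 : |p i| ≤ ‖p‖ := by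
      simpa using norm_le_pi_norm p i
    rw [hpi] at h2
    linarith
  -- apply the divergence theorem
  have hcont : Continuous W := by
    have : Continuous (fun z => w (eL.symm z)) := hw.continuous.comp eL.symm.continuous
    exact eL.continuous.comp this
  have hsum : (fun y => ∑ i, W' y (Pi.single i 1) i) = fun y => dv (eL.symm y) := by
    funext y; exact htr y
  have hInt : IntegrableOn (fun y => ∑ i, W' y (Pi.single i 1) i) (Set.Icc a b) := by
    rw [hsum]
    exact ((hdvc.comp eL.symm.continuous).continuousOn).integrableOn_compact isCompact_Icc
  have happ := MeasureTheory.integral_divergence_of_hasFDerivAt_off_countable a b hle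
    W W' ∅ Set.countable_empty hcont.continuousOn (fun x _ => hWd x) hInt
  -- boundary terms vanish
  have hrhs : ∀ i : Fin (N+1),
      ((∫ x in Set.Icc (a ∘ i.succAbove) (b ∘ i.succAbove), W (i.insertNth (b i) x) i) -
        ∫ x in Set.Icc (a ∘ i.succAbove) (b ∘ i.succAbove), W (i.insertNth (a i) x) i) = 0 := by
    intro i
    have h1 : ∀ x : Fin N → ℝ, W (i.insertNth (b i) x) i = 0 := by
      intro x
      have : w (eL.symm (i.insertNth (b i) x)) = 0 := by
        apply hface _ i
        rw [Fin.insertNth_apply_same]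
        simp [hb, abs_of_pos hRpos]
      simp [hWdef, this]
    have h2 : ∀ x : Fin N → ℝ, W (i.insertNth (a i) x) i = 0 := by
      intro x
      have : w (eL.symm (i.insertNth (a i) x)) = 0 := by
        apply hface _ i
        rw [Fin.insertNth_apply_same]
        simp [ha, abs_of_pos hRpos]
      simp [hWdef, this]
    simp [h1, h2]
  rw [Finset.sum_congr rfl (fun i _ => hrhs i), Finset.sum_const, smul_zero] at happ
  -- the interior integral equals the full-space integral
  have houtside : ∀ y ∉ Set.Icc a b, dv (eL.symm y) = 0 := by
    intro y hy
    apply hdv0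
    intro hmem
    apply hy
    have h1 : ‖y‖ < R := by
      have := hKR _ hmem
      simpa using this
    constructor <;> intro i <;>
      · have h2 : |y i| ≤ ‖y‖ := by simpa using norm_le_pi_norm y i
        have := abs_le.1 (le_of_lt (lt_of_le_of_lt h2 h1))
        simp [ha, hb]
        linarith [this.1, this.2]
  rw [hsum, setIntegral_eq_integral_of_forall_compl_eq_zero houtside] at happ
  -- transfer via the measure-preserving equivalence
  have htrans : (∫ y, dv (eL.symm y)) = ∫ x, dv x := by
    have hmp := (EuclideanSpace.volume_preserving_symm_measurableEquiv_toLp (Fin (N+1))).symm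
    have hemb := (MeasurableEquiv.toLp 2 (Fin (N+1) → ℝ)).measurableEmbedding
    exact hmp.integral_comp hemb dv
  rw [htrans] at happ
  exact happ

lemma hasDerivAt_slice {n : ℕ} {F : Type*} [NormedAddCommGroup F] [NormedSpace ℝ F]
    (w : ℝ × EuclideanSpace ℝ (Fin n) → F) (hw : ContDiff ℝ (⊤ : ℕ∞) w) (t : ℝ)
    (x : EuclideanSpace ℝ (Fin n)) :
    HasDerivAt (fun τ => w (τ, x)) (fderiv ℝ w (t, x) (1, 0)) t := by
  have h1 : HasDerivAt (fun τ : ℝ => (τ, x)) ((1 : ℝ), (0 : EuclideanSpace ℝ (Fin n))) t :=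
    (hasDerivAt_id t).prodMk (hasDerivAt_const t x)
  exact ((hw.differentiable (by simp) (t, x)).hasFDerivAt).comp_hasDerivAt t h1

lemma key_pointwise {n : ℕ}
    (u η m : ℝ × EuclideanSpace ℝ (Fin n) → EuclideanSpace ℝ (Fin n))
    (hu : ContDiff ℝ (⊤ : ℕ∞) u) (hη : ContDiff ℝ (⊤ : ℕ∞) η) (hm : ContDiff ℝ (⊤ : ℕ∞) m)
    (hsym : ∀ (t : ℝ) (x : EuclideanSpace ℝ (Fin n)), dt η t x + bracket u η t x = 0)
    (hEP : ∀ (t : ℝ) (x : EuclideanSpace ℝ (Fin n)),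
      dt m t x + Dx m t x (u (t, x)) + dive u t x • m (t, x)
        + ContinuousLinearMap.adjoint (Dx u t x) (m (t, x)) = 0)
    (t : ℝ) (x : EuclideanSpace ℝ (Fin n)) :
    fderiv ℝ (fun p => (⟪m p, η p⟫ : ℝ)) (t, x) (1, 0)
      = - LinearMap.trace ℝ _
        ((fderiv ℝ (fun y => (⟪m (t, y), η (t, y)⟫ : ℝ) • u (t, y)) x
          : EuclideanSpace ℝ (Fin n) →L[ℝ] EuclideanSpace ℝ (Fin n))
          : EuclideanSpace ℝ (Fin n) →ₗ[ℝ] EuclideanSpace ℝ (Fin n)) := by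
  have hf : ContDiff ℝ (⊤ : ℕ∞) (fun p => (⟪m p, η p⟫ : ℝ)) := hm.inner ℝ hη
  -- time derivative of the slice of f
  have hmt := hasDerivAt_slice m hm t x
  have hηt := hasDerivAt_slice η hη t x
  have hmt' : HasDerivAt (fun τ => m (τ, x)) (dt m t x) t := by
    rw [dt, hmt.deriv]; exact hmt
  have hηt' : HasDerivAt (fun τ => η (τ, x)) (dt η t x) t := by
    rw [dt, hηt.deriv]; exact hηt
  have hft : HasDerivAt (fun τ => (⟪m (τ, x), η (τ, x)⟫ : ℝ))
      (⟪m (t, x), dt η t x⟫ + ⟪dt m t x, η (t, x)⟫) t := hmt'.inner ℝ hηt'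
  have hL : fderiv ℝ (fun p => (⟪m p, η p⟫ : ℝ)) (t, x) (1, 0)
      = ⟪m (t, x), dt η t x⟫ + ⟪dt m t x, η (t, x)⟫ :=
    (hasDerivAt_slice _ hf t x).unique hft
  -- express dt m and dt η via the equations
  have hdtm : dt m t x = -(Dx m t x (u (t, x)) + dive u t x • m (t, x)
      + ContinuousLinearMap.adjoint (Dx u t x) (m (t, x))) := by
    have h' : dt m t x + (Dx m t x (u (t, x)) + dive u t x • m (t, x)
        + ContinuousLinearMap.adjoint (Dx u t x) (m (t, x))) = 0 := by
      rw [← hEP t x]; abel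
    exact eq_neg_of_add_eq_zero_left h'
  have hdtη : dt η t x = Dx u t x (η (t, x)) - Dx η t x (u (t, x)) := by
    have h' := eq_neg_of_add_eq_zero_left (hsym t x)
    rw [h', bracket, neg_sub]
  -- spatial derivative facts
  have hms : DifferentiableAt ℝ (fun y => m (t, y)) x :=
    (hm.differentiable (by simp)).comp (differentiable_const t |>.prodMk differentiable_id) x
  have hηs : DifferentiableAt ℝ (fun y => η (t, y)) x :=
    (hη.differentiable (by simp)).comp (differentiable_const t |>.prodMk differentiable_id) x
  have hus : DifferentiableAt ℝ (fun y => u (t, y)) x :=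
    (hu.differentiable (by simp)).comp (differentiable_const t |>.prodMk differentiable_id) x
  have hfs : DifferentiableAt ℝ (fun y => (⟪m (t, y), η (t, y)⟫ : ℝ)) x :=
    (hf.differentiable (by simp)).comp (differentiable_const t |>.prodMk differentiable_id) x
  -- fderiv of the product f • u
  have hw : HasFDerivAt (fun y => (⟪m (t, y), η (t, y)⟫ : ℝ) • u (t, y))
      ((⟪m (t, x), η (t, x)⟫ : ℝ) • Dx u t x
        + (fderiv ℝ (fun y => (⟪m (t, y), η (t, y)⟫ : ℝ)) x).smulRight (u (t, x))) x :=
    hfs.hasFDerivAt.smul (hus.hasFDerivAt)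
  have htr : LinearMap.trace ℝ _
      ((fderiv ℝ (fun y => (⟪m (t, y), η (t, y)⟫ : ℝ) • u (t, y)) x
        : EuclideanSpace ℝ (Fin n) →L[ℝ] EuclideanSpace ℝ (Fin n))
        : EuclideanSpace ℝ (Fin n) →ₗ[ℝ] EuclideanSpace ℝ (Fin n))
      = (⟪m (t, x), η (t, x)⟫ : ℝ) * dive u t x
        + fderiv ℝ (fun y => (⟪m (t, y), η (t, y)⟫ : ℝ)) x (u (t, x)) := by
    rw [hw.fderiv]
    push_cast [ContinuousLinearMap.coe_add, ContinuousLinearMap.coe_smul]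
    rw [map_add, LinearMap.map_smul, trace_smulRight', dive]
    simp [smul_eq_mul]
  -- expand the spatial derivative of the inner product
  have hDf : fderiv ℝ (fun y => (⟪m (t, y), η (t, y)⟫ : ℝ)) x (u (t, x))
      = ⟪m (t, x), Dx η t x (u (t, x))⟫ + ⟪Dx m t x (u (t, x)), η (t, x)⟫ :=
    fderiv_inner_apply ℝ hms hηs (u (t, x))
  rw [hL, htr, hDf, hdtm, hdtη]
  simp only [inner_sub_right, inner_neg_left, inner_add_left, real_inner_smul_left]
  rw [ContinuousLinearMap.adjoint_inner_left]
  ring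

/-- Noether's theorem for EPDiff (Theorem 2.1, no advected quantities): if `η` is a
relabelling symmetry, `m` satisfies the EPDiff momentum equation and is compactly
supported in space, then the Noether integral `∫ ⟪m,η⟫ dx` is constant in time. -/
theorem noether_epdiff {n : ℕ} (hn : 1 ≤ n)
    (u η m : ℝ × EuclideanSpace ℝ (Fin n) → EuclideanSpace ℝ (Fin n))
    (hu : ContDiff ℝ (⊤ : ℕ∞) u) (hη : ContDiff ℝ (⊤ : ℕ∞) η) (hm : ContDiff ℝ (⊤ : ℕ∞) m)
    (hsym : ∀ (t : ℝ) (x : EuclideanSpace ℝ (Fin n)), dt η t x + bracket u η t x = 0)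
    (hEP : ∀ (t : ℝ) (x : EuclideanSpace ℝ (Fin n)),
      dt m t x + Dx m t x (u (t, x)) + dive u t x • m (t, x)
        + ContinuousLinearMap.adjoint (Dx u t x) (m (t, x)) = 0)
    (K : Set (EuclideanSpace ℝ (Fin n))) (hK : IsCompact K)
    (hsupp : ∀ (t : ℝ) (x : EuclideanSpace ℝ (Fin n)), x ∉ K → m (t, x) = 0) :
    ∀ t₁ t₂ : ℝ,
      (∫ x, ⟪m (t₁, x), η (t₁, x)⟫) = ∫ x, ⟪m (t₂, x), η (t₂, x)⟫ := by
  obtain ⟨N, rfl⟩ : ∃ N, n = N + 1 := ⟨n - 1, (Nat.succ_pred_eq_of_pos hn).symm⟩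
  set f : ℝ × EuclideanSpace ℝ (Fin (N+1)) → ℝ := fun p => (⟪m p, η p⟫ : ℝ) with hfdef
  have hf : ContDiff ℝ (⊤ : ℕ∞) f := hm.inner ℝ hη
  have hfc : Continuous f := hf.continuous
  set g : ℝ × EuclideanSpace ℝ (Fin (N+1)) → ℝ := fun p => fderiv ℝ f p (1, 0) with hgdef
  have hgc : Continuous g :=
    (hf.continuous_fderiv (by simp)).clm_apply continuous_const
  -- the integrand and its t-derivative vanish off K
  have hf0 : ∀ (τ : ℝ) (x : EuclideanSpace ℝ (Fin (N+1))), x ∉ K → f (τ, x) = 0 := by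
    intro τ x hx
    simp [hfdef, hsupp τ x hx]
  have hg0 : ∀ (τ : ℝ) (x : EuclideanSpace ℝ (Fin (N+1))), x ∉ K → g (τ, x) = 0 := by
    intro τ x hx
    have h1 : (fun τ' => f (τ', x)) = fun _ => (0 : ℝ) := funext fun τ' => hf0 τ' x hx
    have h2 := hasDerivAt_slice f hf τ x
    rw [h1] at h2
    exact h2.unique (hasDerivAt_const τ 0)
  -- differentiation under the integral sign
  have hderiv : ∀ t₀ : ℝ, HasDerivAt (fun t => ∫ x, f (t, x)) (∫ x, g (t₀, x)) t₀ := by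
    intro t₀
    obtain ⟨C, hC⟩ := ((isCompact_Icc (a := t₀ - 1) (b := t₀ + 1)).prod hK).exists_bound_of_continuousOn hgc.continuousOn
    have hmain := hasDerivAt_integral_of_dominated_loc_of_deriv_le
      (μ := volume) (F := fun t x => f (t, x)) (F' := fun t x => g (t, x)) (x₀ := t₀)
      (bound := K.indicator fun _ => C) (s := Metric.ball t₀ 1) (Metric.ball_mem_nhds t₀ one_pos)
      (Filter.Eventually.of_forall fun τ =>
        ((hfc.comp (continuous_const.prodMk continuous_id)).aestronglyMeasurable))
      ?_ ?_ ?_ ?_ ?_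
    · exact hmain.2
    · -- integrability of f (t₀, ·)
      refine (hfc.comp (continuous_const.prodMk continuous_id)).integrable_of_hasCompactSupport ?_
      exact HasCompactSupport.intro hK fun x hx => hf0 t₀ x hx
    · exact (hgc.comp (continuous_const.prodMk continuous_id)).aestronglyMeasurable
    · -- the uniform bound
      refine Filter.Eventually.of_forall fun x => fun τ hτ => ?_
      by_cases hx : x ∈ K
      · rw [Set.indicator_of_mem hx]
        refine hC (τ, x) ⟨?_, hx⟩
        rw [Real.ball_eq_Ioo] at hτ
        exact ⟨le_of_lt hτ.1, le_of_lt hτ.2⟩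
      · rw [Set.indicator_of_notMem hx]
        show ‖g (τ, x)‖ ≤ 0
        rw [hg0 τ x hx]
        simp
    · -- integrability of the bound
      exact (integrable_indicator_iff hK.measurableSet).2
        (integrableOn_const hK.measure_lt_top.ne)
    · -- pointwise differentiability
      exact Filter.Eventually.of_forall fun x => fun τ hτ => hasDerivAt_slice f hf τ x
  -- the derivative is zero
  have hzero : ∀ t₀ : ℝ, (∫ x, g (t₀, x)) = 0 := by
    intro t₀
    have hkey : ∀ x, g (t₀, x) = - LinearMap.trace ℝ _
        ((fderiv ℝ (fun y => f (t₀, y) • u (t₀, y)) x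
          : EuclideanSpace ℝ (Fin (N+1)) →L[ℝ] EuclideanSpace ℝ (Fin (N+1)))
          : EuclideanSpace ℝ (Fin (N+1)) →ₗ[ℝ] EuclideanSpace ℝ (Fin (N+1))) :=
      fun x => key_pointwise u η m hu hη hm hsym hEP t₀ x
    rw [show (fun x => g (t₀, x)) = fun x => - LinearMap.trace ℝ _
        ((fderiv ℝ (fun y => f (t₀, y) • u (t₀, y)) x
          : EuclideanSpace ℝ (Fin (N+1)) →L[ℝ] EuclideanSpace ℝ (Fin (N+1)))
          : EuclideanSpace ℝ (Fin (N+1)) →ₗ[ℝ] EuclideanSpace ℝ (Fin (N+1)))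
      from funext hkey]
    rw [integral_neg]
    have hwc : ContDiff ℝ 1 (fun y => f (t₀, y) • u (t₀, y)) := by
      have h1 : ContDiff ℝ (⊤ : ℕ∞) (fun y : EuclideanSpace ℝ (Fin (N+1)) => f (t₀, y)) :=
        hf.comp (contDiff_const.prodMk contDiff_id)
      have h2 : ContDiff ℝ (⊤ : ℕ∞) (fun y : EuclideanSpace ℝ (Fin (N+1)) => u (t₀, y)) :=
        hu.comp (contDiff_const.prodMk contDiff_id)
      exact (h1.smul h2).of_le (by simp)
    rw [integral_div_eq_zero _ hwc hK (fun x hx => by rw [hf0 t₀ x hx, zero_smul]), neg_zero]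
  -- conclude
  intro t₁ t₂
  have hdiff : Differentiable ℝ (fun t => ∫ x, f (t, x)) :=
    fun t => (hderiv t).differentiableAt
  have hd0 : ∀ t, deriv (fun t => ∫ x, f (t, x)) t = 0 := fun t => by
    rw [(hderiv t).deriv, hzero t]
  exact is_const_of_deriv_eq_zero hdiff hd0 t₁ t₂
end
end

section
/- Conservation of helicity (equation (helicity-int)): Let u, v : ℝ × E → E and b : ℝ × E → ℝ be smooth, where E = EuclideanSpace ℝ (Fin 3). Assume v satisfies the Kelvin equation ∂t v + D_x v(u) + (D_x u)ᵀ v = ∇b everywhere, and that there is a compact set K ⊆ E with v(t,x) = 0 whenever x ∉ K. Then the helicity t ↦ ∫_E ⟪v(t,x), curl v(t,x)⟫ dx is constant in t. -/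
open scoped RealInnerProductSpace
open MeasureTheory
noncomputable section

/-- Curl of a time-dependent vector field on `EuclideanSpace ℝ (Fin 3)` (0-indexed components). -/
def curl (w : ℝ × EuclideanSpace ℝ (Fin 3) → EuclideanSpace ℝ (Fin 3)) (t : ℝ)
    (x : EuclideanSpace ℝ (Fin 3)) : EuclideanSpace ℝ (Fin 3) :=
  (WithLp.equiv 2 (Fin 3 → ℝ)).symm
    ![Dx w t x (EuclideanSpace.single 1 1) 2 - Dx w t x (EuclideanSpace.single 2 1) 1,
      Dx w t x (EuclideanSpace.single 2 1) 0 - Dx w t x (EuclideanSpace.single 0 1) 2,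
      Dx w t x (EuclideanSpace.single 0 1) 1 - Dx w t x (EuclideanSpace.single 1 1) 0]

/-- Cross product on `EuclideanSpace ℝ (Fin 3)`. -/
def cross (a b : EuclideanSpace ℝ (Fin 3)) : EuclideanSpace ℝ (Fin 3) :=
  (WithLp.equiv 2 (Fin 3 → ℝ)).symm
    ![a 1 * b 2 - a 2 * b 1, a 2 * b 0 - a 0 * b 2, a 0 * b 1 - a 1 * b 0]


/-! ### Auxiliary machinery -/

open Metric

abbrev E3 := EuclideanSpace ℝ (Fin 3)
abbrev P3 := ℝ × E3

def pdd {X : Type*} [NormedAddCommGroup X] [NormedSpace ℝ X] (w : X) (f : X → ℝ) : X → ℝ :=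
  fun p => fderiv ℝ f p w

def ee (i : Fin 3) : E3 := EuclideanSpace.single i 1
def exi (i : Fin 3) : P3 := (0, ee i)
def ett : P3 := (1, 0)
def vcmp (w : P3 → E3) (i : Fin 3) : P3 → ℝ := fun p => w p i

def omg (v : P3 → E3) : Fin 3 → P3 → ℝ
  | 0 => fun p => pdd (exi 1) (vcmp v 2) p - pdd (exi 2) (vcmp v 1) p
  | 1 => fun p => pdd (exi 2) (vcmp v 0) p - pdd (exi 0) (vcmp v 2) p
  | 2 => fun p => pdd (exi 0) (vcmp v 1) p - pdd (exi 1) (vcmp v 0) p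

def hel (v : P3 → E3) : P3 → ℝ := fun p => ∑ i : Fin 3, vcmp v i p * omg v i p

def Wf (u v : P3 → E3) (b : P3 → ℝ) (i : Fin 3) : P3 → ℝ :=
  fun p => b p * omg v i p - hel v p * vcmp u i p

section Pointwise
section pddAPI
variable {X : Type*} [NormedAddCommGroup X] [NormedSpace ℝ X]

theorem pdd_smooth {f : X → ℝ} (hf : ContDiff ℝ (⊤ : ℕ∞) f) (w : X) : ContDiff ℝ (⊤ : ℕ∞) (pdd w f) :=
  (hf.fderiv_right (by simp)).clm_apply contDiff_const

theorem pdd_eq_snd {f : X → ℝ} (hf : ContDiff ℝ (⊤ : ℕ∞) f) (w1 w2 : X) (p : X) :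
    pdd w1 (pdd w2 f) p = fderiv ℝ (fderiv ℝ f) p w1 w2 := by
  have hdiff : DifferentiableAt ℝ (fderiv ℝ f) p :=
    ((hf.fderiv_right (m := (⊤ : ℕ∞)) (by simp)).differentiable (by simp)).differentiableAt
  show fderiv ℝ (fun q => fderiv ℝ f q w2) p w1 = _
  rw [fderiv_clm_apply hdiff (differentiableAt_const _)]
  simp

theorem pdd_comm {f : X → ℝ} (hf : ContDiff ℝ (⊤ : ℕ∞) f) (w1 w2 : X) (p : X) :
    pdd w1 (pdd w2 f) p = pdd w2 (pdd w1 f) p := by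
  rw [pdd_eq_snd hf, pdd_eq_snd hf]
  exact (hf.contDiffAt.isSymmSndFDerivAt (by rw [minSmoothness_of_isRCLikeNormedField]; exact WithTop.coe_le_coe.mpr (le_top : (2 : ℕ∞) ≤ ⊤))) w1 w2

theorem pdd_mul {f g : X → ℝ} (hf : ContDiff ℝ (⊤ : ℕ∞) f) (hg : ContDiff ℝ (⊤ : ℕ∞) g) (w : X) (p : X) :
    pdd w (fun q => f q * g q) p = pdd w f p * g p + f p * pdd w g p := by
  show fderiv ℝ (fun q => f q * g q) p w = _
  rw [fderiv_fun_mul (hf.differentiable (by simp)).differentiableAt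
    (hg.differentiable (by simp)).differentiableAt]
  simp [pdd]; ring

theorem pdd_add {f g : X → ℝ} (hf : ContDiff ℝ (⊤ : ℕ∞) f) (hg : ContDiff ℝ (⊤ : ℕ∞) g) (w : X) (p : X) :
    pdd w (fun q => f q + g q) p = pdd w f p + pdd w g p := by
  show fderiv ℝ (fun q => f q + g q) p w = _
  rw [fderiv_fun_add (hf.differentiable (by simp)).differentiableAt
    (hg.differentiable (by simp)).differentiableAt]
  rfl

theorem pdd_sub {f g : X → ℝ} (hf : ContDiff ℝ (⊤ : ℕ∞) f) (hg : ContDiff ℝ (⊤ : ℕ∞) g) (w : X) (p : X) :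
    pdd w (fun q => f q - g q) p = pdd w f p - pdd w g p := by
  show fderiv ℝ (fun q => f q - g q) p w = _
  rw [fderiv_fun_sub (hf.differentiable (by simp)).differentiableAt
    (hg.differentiable (by simp)).differentiableAt]
  rfl

theorem pdd_sum3 {a0 a1 a2 g0 g1 g2 : X → ℝ}
    (ha0 : ContDiff ℝ (⊤ : ℕ∞) a0) (ha1 : ContDiff ℝ (⊤ : ℕ∞) a1) (ha2 : ContDiff ℝ (⊤ : ℕ∞) a2)
    (hg0 : ContDiff ℝ (⊤ : ℕ∞) g0) (hg1 : ContDiff ℝ (⊤ : ℕ∞) g1) (hg2 : ContDiff ℝ (⊤ : ℕ∞) g2)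
    (w : X) (p : X) :
    pdd w (fun q => a0 q * g0 q + a1 q * g1 q + a2 q * g2 q) p =
      (pdd w a0 p * g0 p + a0 p * pdd w g0 p) + (pdd w a1 p * g1 p + a1 p * pdd w g1 p)
        + (pdd w a2 p * g2 p + a2 p * pdd w g2 p) := by
  rw [pdd_add ((ha0.mul hg0).add (ha1.mul hg1)) (ha2.mul hg2),
    pdd_add (ha0.mul hg0) (ha1.mul hg1),
    pdd_mul ha0 hg0, pdd_mul ha1 hg1, pdd_mul ha2 hg2]

theorem pdd_comb {f0 a0 a1 a2 g0 g1 g2 c0 c1 c2 d0 d1 d2 : X → ℝ}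
    (hf0 : ContDiff ℝ (⊤ : ℕ∞) f0)
    (ha0 : ContDiff ℝ (⊤ : ℕ∞) a0) (ha1 : ContDiff ℝ (⊤ : ℕ∞) a1) (ha2 : ContDiff ℝ (⊤ : ℕ∞) a2)
    (hg0 : ContDiff ℝ (⊤ : ℕ∞) g0) (hg1 : ContDiff ℝ (⊤ : ℕ∞) g1) (hg2 : ContDiff ℝ (⊤ : ℕ∞) g2)
    (hc0 : ContDiff ℝ (⊤ : ℕ∞) c0) (hc1 : ContDiff ℝ (⊤ : ℕ∞) c1) (hc2 : ContDiff ℝ (⊤ : ℕ∞) c2)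
    (hd0 : ContDiff ℝ (⊤ : ℕ∞) d0) (hd1 : ContDiff ℝ (⊤ : ℕ∞) d1) (hd2 : ContDiff ℝ (⊤ : ℕ∞) d2)
    (w : X) (p : X) :
    pdd w (fun q => f0 q - (a0 q * g0 q + a1 q * g1 q + a2 q * g2 q)
        - (c0 q * d0 q + c1 q * d1 q + c2 q * d2 q)) p =
      pdd w f0 p
        - ((pdd w a0 p * g0 p + a0 p * pdd w g0 p) + (pdd w a1 p * g1 p + a1 p * pdd w g1 p)
            + (pdd w a2 p * g2 p + a2 p * pdd w g2 p))
        - ((pdd w c0 p * d0 p + c0 p * pdd w d0 p) + (pdd w c1 p * d1 p + c1 p * pdd w d1 p)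
            + (pdd w c2 p * d2 p + c2 p * pdd w d2 p)) := by
  have hS1 : ContDiff ℝ (⊤ : ℕ∞) (fun q => a0 q * g0 q + a1 q * g1 q + a2 q * g2 q) :=
    ((ha0.mul hg0).add (ha1.mul hg1)).add (ha2.mul hg2)
  have hS2 : ContDiff ℝ (⊤ : ℕ∞) (fun q => c0 q * d0 q + c1 q * d1 q + c2 q * d2 q) :=
    ((hc0.mul hd0).add (hc1.mul hd1)).add (hc2.mul hd2)
  rw [pdd_sub (hf0.sub hS1) hS2, pdd_sub hf0 hS1,
    pdd_sum3 ha0 ha1 ha2 hg0 hg1 hg2, pdd_sum3 hc0 hc1 hc2 hd0 hd1 hd2]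

end pddAPI

theorem vcmp_smooth {w : P3 → E3} (hw : ContDiff ℝ (⊤ : ℕ∞) w) (i : Fin 3) : ContDiff ℝ (⊤ : ℕ∞) (vcmp w i) :=
  (EuclideanSpace.proj (𝕜 := ℝ) i).contDiff.comp hw

theorem omg_smooth {v : P3 → E3} (hv : ContDiff ℝ (⊤ : ℕ∞) v) (i : Fin 3) : ContDiff ℝ (⊤ : ℕ∞) (omg v i) := by
  fin_cases i <;>
    exact (pdd_smooth (vcmp_smooth hv _) _).sub (pdd_smooth (vcmp_smooth hv _) _)

theorem hel_eq (v : P3 → E3) : hel v = fun p =>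
    vcmp v 0 p * omg v 0 p + vcmp v 1 p * omg v 1 p + vcmp v 2 p * omg v 2 p := by
  funext p; simp [hel, Fin.sum_univ_three]

theorem hel_smooth {v : P3 → E3} (hv : ContDiff ℝ (⊤ : ℕ∞) v) : ContDiff ℝ (⊤ : ℕ∞) (hel v) := by
  rw [hel_eq]
  exact (((vcmp_smooth hv 0).mul (omg_smooth hv 0)).add
    ((vcmp_smooth hv 1).mul (omg_smooth hv 1))).add ((vcmp_smooth hv 2).mul (omg_smooth hv 2))

theorem Wf_smooth {u v : P3 → E3} {b : P3 → ℝ}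
    (hu : ContDiff ℝ (⊤ : ℕ∞) u) (hv : ContDiff ℝ (⊤ : ℕ∞) v) (hb : ContDiff ℝ (⊤ : ℕ∞) b) (i : Fin 3) :
    ContDiff ℝ (⊤ : ℕ∞) (Wf u v b i) :=
  (hb.mul (omg_smooth hv i)).sub ((hel_smooth hv).mul (vcmp_smooth hu i))

theorem key_algebra
    (B : ℝ) (U V dB : Fin 3 → ℝ) (dU dV ddB : Fin 3 → Fin 3 → ℝ)
    (ddU ddV : Fin 3 → Fin 3 → Fin 3 → ℝ)
    (hsU : ∀ i j k, ddU i j k = ddU j i k) (hsV : ∀ i j k, ddV i j k = ddV j i k)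
    (hsB : ∀ i j, ddB i j = ddB j i)
    (Ω : Fin 3 → ℝ)
    (hΩ : Ω 0 = dV 1 2 - dV 2 1 ∧ Ω 1 = dV 2 0 - dV 0 2 ∧ Ω 2 = dV 0 1 - dV 1 0)
    (A : Fin 3 → ℝ) (hA : ∀ i, A i = dB i - ∑ j, U j * dV j i - ∑ j, V j * dU i j)
    (dA : Fin 3 → Fin 3 → ℝ)
    (hdA : ∀ j i, dA j i = ddB j i - ∑ k, (dU j k * dV k i + U k * ddV j k i)
                          - ∑ k, (dV j k * dU i k + V k * ddU j i k))
    (tΩ : Fin 3 → ℝ)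
    (htΩ : tΩ 0 = dA 1 2 - dA 2 1 ∧ tΩ 1 = dA 2 0 - dA 0 2 ∧ tΩ 2 = dA 0 1 - dA 1 0)
    (dΩ : Fin 3 → Fin 3 → ℝ)
    (hdΩ : ∀ j, dΩ j 0 = ddV j 1 2 - ddV j 2 1 ∧ dΩ j 1 = ddV j 2 0 - ddV j 0 2 ∧
                 dΩ j 2 = ddV j 0 1 - ddV j 1 0)
    (H : ℝ) (hH : H = ∑ i, V i * Ω i)
    (dH : Fin 3 → ℝ) (hdH : ∀ j, dH j = ∑ i, (dV j i * Ω i + V i * dΩ j i)) :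
    (∑ i, (A i * Ω i + V i * tΩ i)) =
      ∑ i, (dB i * Ω i + B * dΩ i i - (dH i * U i + H * dU i i)) := by
  obtain ⟨h1, h2, h3⟩ := hΩ
  obtain ⟨g1, g2, g3⟩ := htΩ
  obtain ⟨w00, w01, w02⟩ := hdΩ 0
  obtain ⟨w10, w11, w12⟩ := hdΩ 1
  obtain ⟨w20, w21, w22⟩ := hdΩ 2
  simp only [Fin.sum_univ_three, h1, h2, h3, g1, g2, g3, hH, hdH, hA, hdA,
    w00, w01, w02, w10, w11, w12, w20, w21, w22]
  rw [hsB 1 2, hsB 0 2, hsB 0 1]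
  rw [hsV 1 2 0, hsV 0 2 0, hsV 0 1 0, hsV 1 2 1, hsV 0 2 1, hsV 0 1 1,
      hsV 1 2 2, hsV 0 2 2, hsV 0 1 2,
      hsU 1 2 0, hsU 0 2 0, hsU 0 1 0, hsU 1 2 1, hsU 0 2 1, hsU 0 1 1,
      hsU 1 2 2, hsU 0 2 2, hsU 0 1 2]
  ring

theorem pointwise_id {u v : P3 → E3} {b : P3 → ℝ}
    (hu : ContDiff ℝ (⊤ : ℕ∞) u) (hv : ContDiff ℝ (⊤ : ℕ∞) v) (hb : ContDiff ℝ (⊤ : ℕ∞) b)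
    (hkel : ∀ (i : Fin 3) (p : P3),
      pdd ett (vcmp v i) p
        = pdd (exi i) b p
          - (vcmp u 0 p * pdd (exi 0) (vcmp v i) p + vcmp u 1 p * pdd (exi 1) (vcmp v i) p
              + vcmp u 2 p * pdd (exi 2) (vcmp v i) p)
          - (vcmp v 0 p * pdd (exi i) (vcmp u 0) p + vcmp v 1 p * pdd (exi i) (vcmp u 1) p
              + vcmp v 2 p * pdd (exi i) (vcmp u 2) p)) :
    ∀ p : P3, pdd ett (hel v) p = ∑ i : Fin 3, pdd (exi i) (Wf u v b i) p := by
  intro p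
  have hKfun : ∀ i : Fin 3, pdd ett (vcmp v i) = fun q =>
      pdd (exi i) b q
        - (vcmp u 0 q * pdd (exi 0) (vcmp v i) q + vcmp u 1 q * pdd (exi 1) (vcmp v i) q
            + vcmp u 2 q * pdd (exi 2) (vcmp v i) q)
        - (vcmp v 0 q * pdd (exi i) (vcmp u 0) q + vcmp v 1 q * pdd (exi i) (vcmp u 1) q
            + vcmp v 2 q * pdd (exi i) (vcmp u 2) q) :=
    fun i => funext fun q => hkel i q
  -- atoms
  set U : Fin 3 → ℝ := fun i => vcmp u i p with hUdef
  set V : Fin 3 → ℝ := fun i => vcmp v i p with hVdef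
  set dB : Fin 3 → ℝ := fun i => pdd (exi i) b p with hdBdef
  set dU : Fin 3 → Fin 3 → ℝ := fun i j => pdd (exi i) (vcmp u j) p with hdUdef
  set dV : Fin 3 → Fin 3 → ℝ := fun i j => pdd (exi i) (vcmp v j) p with hdVdef
  set ddB : Fin 3 → Fin 3 → ℝ := fun i j => pdd (exi i) (pdd (exi j) b) p with hddBdef
  set ddU : Fin 3 → Fin 3 → Fin 3 → ℝ :=
    fun i j k => pdd (exi i) (pdd (exi j) (vcmp u k)) p with hddUdef
  set ddV : Fin 3 → Fin 3 → Fin 3 → ℝ :=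
    fun i j k => pdd (exi i) (pdd (exi j) (vcmp v k)) p with hddVdef
  set Om : Fin 3 → ℝ := fun i => omg v i p with hOmdef
  set A : Fin 3 → ℝ := fun i => pdd ett (vcmp v i) p with hAdef
  set dA : Fin 3 → Fin 3 → ℝ := fun j i => pdd (exi j) (pdd ett (vcmp v i)) p with hdAdef
  set tOm : Fin 3 → ℝ := fun i => pdd ett (omg v i) p with htOmdef
  set dOm : Fin 3 → Fin 3 → ℝ := fun j i => pdd (exi j) (omg v i) p with hdOmdef
  set dH : Fin 3 → ℝ := fun j => pdd (exi j) (hel v) p with hdHdef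
  -- obligations
  have hsU : ∀ i j k, ddU i j k = ddU j i k :=
    fun i j k => pdd_comm (vcmp_smooth hu k) (exi i) (exi j) p
  have hsV : ∀ i j k, ddV i j k = ddV j i k :=
    fun i j k => pdd_comm (vcmp_smooth hv k) (exi i) (exi j) p
  have hsB : ∀ i j, ddB i j = ddB j i := fun i j => pdd_comm hb (exi i) (exi j) p
  have hOm : Om 0 = dV 1 2 - dV 2 1 ∧ Om 1 = dV 2 0 - dV 0 2 ∧ Om 2 = dV 0 1 - dV 1 0 :=
    ⟨rfl, rfl, rfl⟩
  have hA : ∀ i, A i = dB i - ∑ j, U j * dV j i - ∑ j, V j * dU i j := by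
    intro i
    simp only [hAdef, hdBdef, hUdef, hVdef, hdUdef, hdVdef, Fin.sum_univ_three]
    exact hkel i p
  have hdA : ∀ j i, dA j i = ddB j i - ∑ k, (dU j k * dV k i + U k * ddV j k i)
      - ∑ k, (dV j k * dU i k + V k * ddU j i k) := by
    intro j i
    simp only [hdAdef, hddBdef, hUdef, hVdef, hdUdef, hdVdef, hddUdef, hddVdef,
      Fin.sum_univ_three]
    rw [hKfun i, pdd_comb (pdd_smooth hb (exi i))
      (vcmp_smooth hu 0) (vcmp_smooth hu 1) (vcmp_smooth hu 2)
      (pdd_smooth (vcmp_smooth hv i) (exi 0)) (pdd_smooth (vcmp_smooth hv i) (exi 1))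
      (pdd_smooth (vcmp_smooth hv i) (exi 2))
      (vcmp_smooth hv 0) (vcmp_smooth hv 1) (vcmp_smooth hv 2)
      (pdd_smooth (vcmp_smooth hu 0) (exi i)) (pdd_smooth (vcmp_smooth hu 1) (exi i))
      (pdd_smooth (vcmp_smooth hu 2) (exi i))]
  have htOm : tOm 0 = dA 1 2 - dA 2 1 ∧ tOm 1 = dA 2 0 - dA 0 2 ∧ tOm 2 = dA 0 1 - dA 1 0 := by
    refine ⟨?_, ?_, ?_⟩
    · show pdd ett (omg v 0) p = _
      rw [show omg v 0 = fun q => pdd (exi 1) (vcmp v 2) q - pdd (exi 2) (vcmp v 1) q from rfl,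
        pdd_sub (pdd_smooth (vcmp_smooth hv 2) _) (pdd_smooth (vcmp_smooth hv 1) _),
        show dA 1 2 = pdd (exi 1) (pdd ett (vcmp v 2)) p from rfl,
        show dA 2 1 = pdd (exi 2) (pdd ett (vcmp v 1)) p from rfl,
        pdd_comm (vcmp_smooth hv 2) ett (exi 1) p, pdd_comm (vcmp_smooth hv 1) ett (exi 2) p]
    · show pdd ett (omg v 1) p = _
      rw [show omg v 1 = fun q => pdd (exi 2) (vcmp v 0) q - pdd (exi 0) (vcmp v 2) q from rfl,
        pdd_sub (pdd_smooth (vcmp_smooth hv 0) _) (pdd_smooth (vcmp_smooth hv 2) _),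
        show dA 2 0 = pdd (exi 2) (pdd ett (vcmp v 0)) p from rfl,
        show dA 0 2 = pdd (exi 0) (pdd ett (vcmp v 2)) p from rfl,
        pdd_comm (vcmp_smooth hv 0) ett (exi 2) p, pdd_comm (vcmp_smooth hv 2) ett (exi 0) p]
    · show pdd ett (omg v 2) p = _
      rw [show omg v 2 = fun q => pdd (exi 0) (vcmp v 1) q - pdd (exi 1) (vcmp v 0) q from rfl,
        pdd_sub (pdd_smooth (vcmp_smooth hv 1) _) (pdd_smooth (vcmp_smooth hv 0) _),
        show dA 0 1 = pdd (exi 0) (pdd ett (vcmp v 1)) p from rfl,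
        show dA 1 0 = pdd (exi 1) (pdd ett (vcmp v 0)) p from rfl,
        pdd_comm (vcmp_smooth hv 1) ett (exi 0) p, pdd_comm (vcmp_smooth hv 0) ett (exi 1) p]
  have hdOm : ∀ j, dOm j 0 = ddV j 1 2 - ddV j 2 1 ∧ dOm j 1 = ddV j 2 0 - ddV j 0 2 ∧
      dOm j 2 = ddV j 0 1 - ddV j 1 0 := by
    intro j
    refine ⟨?_, ?_, ?_⟩
    · show pdd (exi j) (omg v 0) p = _
      rw [show omg v 0 = fun q => pdd (exi 1) (vcmp v 2) q - pdd (exi 2) (vcmp v 1) q from rfl,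
        pdd_sub (pdd_smooth (vcmp_smooth hv 2) _) (pdd_smooth (vcmp_smooth hv 1) _)]
    · show pdd (exi j) (omg v 1) p = _
      rw [show omg v 1 = fun q => pdd (exi 2) (vcmp v 0) q - pdd (exi 0) (vcmp v 2) q from rfl,
        pdd_sub (pdd_smooth (vcmp_smooth hv 0) _) (pdd_smooth (vcmp_smooth hv 2) _)]
    · show pdd (exi j) (omg v 2) p = _
      rw [show omg v 2 = fun q => pdd (exi 0) (vcmp v 1) q - pdd (exi 1) (vcmp v 0) q from rfl,
        pdd_sub (pdd_smooth (vcmp_smooth hv 1) _) (pdd_smooth (vcmp_smooth hv 0) _)]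
  have hH : hel v p = ∑ i, V i * Om i := rfl
  have hdH : ∀ j, dH j = ∑ i, (dV j i * Om i + V i * dOm j i) := by
    intro j
    show pdd (exi j) (hel v) p = _
    rw [hel_eq v, pdd_sum3 (vcmp_smooth hv 0) (vcmp_smooth hv 1) (vcmp_smooth hv 2)
      (omg_smooth hv 0) (omg_smooth hv 1) (omg_smooth hv 2)]
    simp only [Fin.sum_univ_three]
    rfl
  have key := key_algebra (b p) U V dB dU dV ddB ddU ddV hsU hsV hsB Om hOm A hA dA hdA
    tOm htOm dOm hdOm (hel v p) hH dH hdH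
  have lhs_eq : pdd ett (hel v) p = ∑ i : Fin 3, (A i * Om i + V i * tOm i) := by
    rw [hel_eq v, pdd_sum3 (vcmp_smooth hv 0) (vcmp_smooth hv 1) (vcmp_smooth hv 2)
      (omg_smooth hv 0) (omg_smooth hv 1) (omg_smooth hv 2)]
    simp only [Fin.sum_univ_three]
    rfl
  have rhs_eq : (∑ i : Fin 3, pdd (exi i) (Wf u v b i) p) =
      ∑ i : Fin 3, (dB i * Om i + b p * dOm i i - (dH i * U i + hel v p * dU i i)) := by
    refine Finset.sum_congr rfl fun i _ => ?_
    rw [show Wf u v b i = fun q => b q * omg v i q - hel v q * vcmp u i q from rfl,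
      pdd_sub (hb.mul (omg_smooth hv i)) ((hel_smooth hv).mul (vcmp_smooth hu i)),
      pdd_mul hb (omg_smooth hv i), pdd_mul (hel_smooth hv) (vcmp_smooth hu i)]
  rw [lhs_eq, rhs_eq]
  exact key

end Pointwise

section Analysis
theorem fderiv_partial' {F : Type*} [NormedAddCommGroup F] [NormedSpace ℝ F]
    (w : P3 → F) (hw : ContDiff ℝ (⊤ : ℕ∞) w) (t : ℝ) (x : E3) (e : E3) :
    fderiv ℝ (fun y => w (t, y)) x e = fderiv ℝ w (t, x) (0, e) := by
  have h1 : HasFDerivAt (fun y : E3 => ((t : ℝ), y)) (ContinuousLinearMap.inr ℝ ℝ E3) x :=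
    (hasFDerivAt_const t x).prodMk (hasFDerivAt_id x)
  have h2 : HasFDerivAt w (fderiv ℝ w (t, x)) (t, x) :=
    ((hw.differentiable (by simp)) (t, x)).hasFDerivAt
  have := (h2.comp x h1).fderiv
  rw [show (fun y => w (t, y)) = w ∘ (fun y : E3 => (t, y)) from rfl, this]
  rfl

/-- vanishing off a closed set implies vanishing of pdd off that set -/
theorem pdd_vanish {K : Set E3} (hKc : IsClosed K) {f : P3 → ℝ}
    (hf0 : ∀ p : P3, p.2 ∉ K → f p = 0) {p : P3} (hp : p.2 ∉ K) (w : P3) :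
    pdd w f p = 0 := by
  have hopen : IsOpen {q : P3 | q.2 ∉ K} := (hKc.preimage continuous_snd).isOpen_compl
  have hev : f =ᶠ[nhds p] (fun _ => (0 : ℝ)) :=
    Filter.eventually_iff_exists_mem.2 ⟨_, hopen.mem_nhds hp, fun q hq => hf0 q hq⟩
  show fderiv ℝ f p w = 0
  rw [hev.fderiv_eq, fderiv_fun_const]
  rfl

/-- integral of a spatial partial derivative of a compactly supported function is zero -/
theorem integral_pdd_eq_zero {K : Set E3} (hK : IsCompact K) {f : P3 → ℝ}
    (hf : ContDiff ℝ (⊤ : ℕ∞) f) (hf0 : ∀ p : P3, p.2 ∉ K → f p = 0) (t : ℝ) (i : Fin 3) :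
    ∫ x : E3, pdd (exi i) f (t, x) = 0 := by
  set g : E3 → ℝ := fun y => f (t, y) with hg
  have hgsm : ContDiff ℝ (⊤ : ℕ∞) g := hf.comp ((contDiff_const (c := t)).prodMk contDiff_id)
  have hgsupp : HasCompactSupport g :=
    HasCompactSupport.intro hK (fun y hy => hf0 (t, y) hy)
  have hder : ∀ y, fderiv ℝ g y (ee i) = pdd (exi i) f (t, y) := by
    intro y; exact fderiv_partial' f hf t y (ee i)
  have hdsupp : ∀ y ∉ K, fderiv ℝ g y (ee i) = 0 := by
    intro y hy; rw [hder y]; exact pdd_vanish hK.isClosed hf0 hy _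
  have hint1 : Integrable (fun y => fderiv ℝ g y (ee i)) := by
    apply Continuous.integrable_of_hasCompactSupport
    · exact ((pdd_smooth hgsm (ee i)).continuous)
    · exact HasCompactSupport.intro hK hdsupp
  have hint2 : Integrable g :=
    hgsm.continuous.integrable_of_hasCompactSupport hgsupp
  have := integral_mul_fderiv_eq_neg_fderiv_mul_of_integrable
    (μ := (volume : Measure E3)) (f := fun _ : E3 => (1 : ℝ)) (g := g) (v := ee i)
    ?_ ?_ ?_ (fun _ _ => differentiableAt_const (1 : ℝ)) (fun y _ => hgsm.differentiable (by simp) y)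
  · simp only [one_mul] at this
    rw [show (∫ x : E3, pdd (exi i) f (t, x)) = ∫ y, fderiv ℝ g y (ee i) from by
      congr 1; funext y; rw [hder y]]
    rw [this]
    simp
  · simpa using (integrable_zero E3 ℝ (volume : Measure E3))
  · simpa using hint1
  · simpa using hint2

theorem const_of_timederiv_div (H : P3 → ℝ) (Wc : Fin 3 → P3 → ℝ)
    (hH : ContDiff ℝ (⊤ : ℕ∞) H) (hWc : ∀ i, ContDiff ℝ (⊤ : ℕ∞) (Wc i))
    (K : Set E3) (hK : IsCompact K)
    (hH0 : ∀ p : P3, p.2 ∉ K → H p = 0) (hW0 : ∀ i, ∀ p : P3, p.2 ∉ K → Wc i p = 0)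
    (hident : ∀ p, pdd ett H p = ∑ i : Fin 3, pdd (exi i) (Wc i) p) :
    ∀ t₁ t₂ : ℝ, (∫ x : E3, H (t₁, x)) = ∫ x : E3, H (t₂, x) := by
  set g : ℝ → ℝ := fun t => ∫ x : E3, H (t, x) with hgdef
  have hHt : ∀ t x, HasDerivAt (fun τ => H (τ, x)) (pdd ett H (t, x)) t := by
    intro t x
    have h1 : HasDerivAt (fun τ : ℝ => (τ, x)) ((1 : ℝ), (0 : E3)) t := by
      simpa using ((hasDerivAt_id t).prodMk (hasDerivAt_const t x))
    have h2 : HasFDerivAt H (fderiv ℝ H (t, x)) (t, x) :=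
      ((hH.differentiable (by simp)) (t, x)).hasFDerivAt
    exact h2.comp_hasDerivAt t h1
  have key : ∀ t₀ : ℝ, HasDerivAt g 0 t₀ := by
    intro t₀
    -- bound on the compact set
    obtain ⟨C, hC⟩ := (((isCompact_Icc (a := t₀ - 1) (b := t₀ + 1)).prod hK)).exists_bound_of_continuousOn
      ((pdd_smooth hH ett).continuous.continuousOn)
    have hbound : ∀ x : E3, ∀ t ∈ ball t₀ 1, ‖pdd ett H (t, x)‖ ≤ Set.indicator K (fun _ => max C 0) x := by
      intro x t ht
      by_cases hx : x ∈ K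
      · rw [Set.indicator_of_mem hx]
        refine le_trans ?_ (le_max_left _ _)
        apply hC
        constructor
        · have := mem_ball_iff_norm.mp ht
          constructor <;> [linarith [neg_le_of_abs_le (le_of_lt (by simpa [Real.norm_eq_abs] using this))];
            linarith [le_of_abs_le (le_of_lt (by simpa [Real.norm_eq_abs] using this))]]
        · exact hx
      · rw [Set.indicator_of_notMem hx]
        rw [pdd_vanish hK.isClosed hH0 hx]
        simp
    have hbint : Integrable (Set.indicator K (fun _ => max C 0)) := by
      exact (integrableOn_const hK.measure_lt_top.ne).integrable_indicator
        hK.isClosed.measurableSet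
    have hmeas : ∀ᶠ t in nhds t₀, AEStronglyMeasurable (fun x : E3 => H (t, x)) volume := by
      filter_upwards with t
      exact (hH.continuous.comp (continuous_const.prodMk continuous_id)).aestronglyMeasurable
    have hint0 : Integrable (fun x : E3 => H (t₀, x)) := by
      apply Continuous.integrable_of_hasCompactSupport
      · exact hH.continuous.comp (continuous_const.prodMk continuous_id)
      · exact HasCompactSupport.intro hK (fun y hy => hH0 (t₀, y) hy)
    have hmeas' : AEStronglyMeasurable (fun x : E3 => pdd ett H (t₀, x)) volume :=
      ((pdd_smooth hH ett).continuous.comp (continuous_const.prodMk continuous_id)).aestronglyMeasurable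
    have hderiv := (hasDerivAt_integral_of_dominated_loc_of_deriv_le
      (F := fun t (x : E3) => H (t, x)) (F' := fun t (x : E3) => pdd ett H (t, x))
      (bound := Set.indicator K (fun _ => max C 0)) (ball_mem_nhds t₀ one_pos) hmeas hint0 hmeas'
      (Filter.Eventually.of_forall (fun x t ht => hbound x t ht)) hbint
      (Filter.Eventually.of_forall (fun x t _ => hHt t x))).2
    have hzero : (∫ x : E3, pdd ett H (t₀, x)) = 0 := by
      have : (∫ x : E3, pdd ett H (t₀, x))
          = ∫ x : E3, ∑ i : Fin 3, pdd (exi i) (Wc i) (t₀, x) := by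
        congr 1; funext x; exact hident (t₀, x)
      rw [this, integral_finset_sum]
      · refine Finset.sum_eq_zero fun i _ => integral_pdd_eq_zero hK (hWc i) (hW0 i) t₀ i
      · intro i _
        apply Continuous.integrable_of_hasCompactSupport
        · exact (pdd_smooth (hWc i) (exi i)).continuous.comp (continuous_const.prodMk continuous_id)
        · exact HasCompactSupport.intro hK
            (fun y hy => pdd_vanish hK.isClosed (hW0 i) hy _)
    rw [hzero] at hderiv
    exact hderiv
  intro t₁ t₂
  exact is_const_of_deriv_eq_zero (fun t => (key t).differentiableAt)
    (fun t => (key t).deriv) t₁ t₂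

end Analysis

section Kelvin
theorem fderiv_partial {F : Type*} [NormedAddCommGroup F] [NormedSpace ℝ F]
    (w : P3 → F) (hw : ContDiff ℝ (⊤ : ℕ∞) w) (t : ℝ) (x : E3) (e : E3) :
    fderiv ℝ (fun y => w (t, y)) x e = fderiv ℝ w (t, x) (0, e) := by
  have h1 : HasFDerivAt (fun y : E3 => ((t : ℝ), y)) (ContinuousLinearMap.inr ℝ ℝ E3) x :=
    (hasFDerivAt_const t x).prodMk (hasFDerivAt_id x)
  have h2 : HasFDerivAt w (fderiv ℝ w (t, x)) (t, x) :=
    ((hw.differentiable (by simp)) (t, x)).hasFDerivAt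
  have := (h2.comp x h1).fderiv
  rw [show (fun y => w (t, y)) = w ∘ (fun y : E3 => (t, y)) from rfl, this]
  rfl

theorem deriv_partial {F : Type*} [NormedAddCommGroup F] [NormedSpace ℝ F]
    (w : P3 → F) (hw : ContDiff ℝ (⊤ : ℕ∞) w) (t : ℝ) (x : E3) :
    deriv (fun τ => w (τ, x)) t = fderiv ℝ w (t, x) (1, 0) := by
  have h1 : HasDerivAt (fun τ : ℝ => (τ, x)) ((1 : ℝ), (0 : E3)) t := by
    simpa using ((hasDerivAt_id t).prodMk (hasDerivAt_const t x))
  have h2 : HasFDerivAt w (fderiv ℝ w (t, x)) (t, x) :=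
    ((hw.differentiable (by simp)) (t, x)).hasFDerivAt
  exact (h2.comp_hasDerivAt t h1).deriv

theorem fderiv_vcmp {w : P3 → E3} (hw : ContDiff ℝ (⊤ : ℕ∞) w) (i : Fin 3) (p : P3) (q : P3) :
    fderiv ℝ (vcmp w i) p q = fderiv ℝ w p q i := by
  have h2 : HasFDerivAt w (fderiv ℝ w p) p := ((hw.differentiable (by simp)) p).hasFDerivAt
  have := ((EuclideanSpace.proj (𝕜 := ℝ) i).hasFDerivAt.comp p h2).fderiv
  rw [show vcmp w i = (EuclideanSpace.proj (𝕜 := ℝ) i) ∘ w from rfl, this]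
  rfl

theorem inner_ee (a : E3) (i : Fin 3) : ⟪a, ee i⟫ = a i := by
  rw [ee, EuclideanSpace.inner_single_right]; simp

theorem basis_expand (T : P3 →L[ℝ] ℝ) (a : E3) :
    T (0, a) = a 0 * T (exi 0) + a 1 * T (exi 1) + a 2 * T (exi 2) := by
  have ha : ((0, a) : P3) = a 0 • (exi 0) + a 1 • (exi 1) + a 2 • (exi 2) := by
    refine Prod.ext (by simp [exi]) ?_
    simp only [exi, ee, Prod.snd_add, Prod.smul_snd]
    ext j
    fin_cases j <;> simp [EuclideanSpace.single_apply]
  rw [ha]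
  simp

theorem Dx_cmp {w : P3 → E3} (hw : ContDiff ℝ (⊤ : ℕ∞) w) (t : ℝ) (x : E3) (e : E3) (i : Fin 3) :
    Dx w t x e i = fderiv ℝ (vcmp w i) (t, x) (0, e) := by
  rw [fderiv_vcmp hw]
  show (fderiv ℝ (fun y => w (t, y)) x e) i = _
  rw [fderiv_partial w hw]

theorem kelvin_cmp
    (u v : P3 → E3) (b : P3 → ℝ)
    (hu : ContDiff ℝ (⊤ : ℕ∞) u) (hv : ContDiff ℝ (⊤ : ℕ∞) v) (hb : ContDiff ℝ (⊤ : ℕ∞) b)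
    (hkelvin : ∀ (t : ℝ) (x : E3),
      dt v t x + Dx v t x (u (t, x))
        + ContinuousLinearMap.adjoint (Dx u t x) (v (t, x)) = grad b t x)
    (t : ℝ) (x : E3) (i : Fin 3) :
    pdd ett (vcmp v i) (t, x)
      + (u (t,x) 0 * pdd (exi 0) (vcmp v i) (t, x)
        + u (t,x) 1 * pdd (exi 1) (vcmp v i) (t, x)
        + u (t,x) 2 * pdd (exi 2) (vcmp v i) (t, x))
      + (v (t,x) 0 * pdd (exi i) (vcmp u 0) (t, x)
        + v (t,x) 1 * pdd (exi i) (vcmp u 1) (t, x)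
        + v (t,x) 2 * pdd (exi i) (vcmp u 2) (t, x))
      = pdd (exi i) b (t, x) := by
  have hk := congrArg (fun z => ⟪z, ee i⟫) (hkelvin t x)
  simp only [inner_add_left] at hk
  -- term 1
  have e1 : ⟪dt v t x, ee i⟫ = pdd ett (vcmp v i) (t, x) := by
    rw [inner_ee]
    show (deriv (fun τ => v (τ, x)) t) i = _
    have : (fun τ => v (τ, x) i) = (fun τ => vcmp v i (τ, x)) := rfl
    calc (deriv (fun τ => v (τ, x)) t) i
        = fderiv ℝ v (t, x) (1, 0) i := by rw [deriv_partial v hv]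
      _ = fderiv ℝ (vcmp v i) (t, x) ((1 : ℝ), (0 : E3)) := (fderiv_vcmp hv i _ _).symm
      _ = pdd ett (vcmp v i) (t, x) := rfl
  -- term 2
  have e2 : ⟪Dx v t x (u (t, x)), ee i⟫
      = u (t,x) 0 * pdd (exi 0) (vcmp v i) (t, x)
        + u (t,x) 1 * pdd (exi 1) (vcmp v i) (t, x)
        + u (t,x) 2 * pdd (exi 2) (vcmp v i) (t, x) := by
    rw [inner_ee, Dx_cmp hv]
    exact basis_expand (fderiv ℝ (vcmp v i) (t, x)) (u (t, x))
  -- term 3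
  have e3 : ⟪ContinuousLinearMap.adjoint (Dx u t x) (v (t, x)), ee i⟫
      = v (t,x) 0 * pdd (exi i) (vcmp u 0) (t, x)
        + v (t,x) 1 * pdd (exi i) (vcmp u 1) (t, x)
        + v (t,x) 2 * pdd (exi i) (vcmp u 2) (t, x) := by
    rw [ContinuousLinearMap.adjoint_inner_left]
    have hD : ∀ j, Dx u t x (ee i) j = pdd (exi i) (vcmp u j) (t, x) := by
      intro j; rw [Dx_cmp hu]; rfl
    rw [show ⟪v (t, x), Dx u t x (ee i)⟫
        = ∑ j, v (t, x) j * Dx u t x (ee i) j from by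
      simp [PiLp.inner_apply, RCLike.inner_apply, mul_comm]]
    simp only [Fin.sum_univ_three, hD]
  -- term 4
  have e4 : ⟪grad b t x, ee i⟫ = pdd (exi i) b (t, x) := by
    show ⟪gradient (fun y => b (t, y)) x, ee i⟫ = _
    unfold gradient
    rw [InnerProductSpace.toDual_symm_apply]
    show fderiv ℝ (fun y => b (t, y)) x (ee i) = _
    rw [fderiv_partial b hb]
    rfl
  rw [e1, e2, e3, e4] at hk
  exact hk

end Kelvin

/-- Conservation of helicity (equation (helicity-int)): if `v` satisfies the Kelvin
equation and is compactly supported in space, then `∫ ⟪v, curl v⟫ dx` is constant. -/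
theorem helicity_conserved
    (u v : ℝ × EuclideanSpace ℝ (Fin 3) → EuclideanSpace ℝ (Fin 3))
    (b : ℝ × EuclideanSpace ℝ (Fin 3) → ℝ)
    (hu : ContDiff ℝ (⊤ : ℕ∞) u) (hv : ContDiff ℝ (⊤ : ℕ∞) v) (hb : ContDiff ℝ (⊤ : ℕ∞) b)
    (hkelvin : ∀ (t : ℝ) (x : EuclideanSpace ℝ (Fin 3)),
      dt v t x + Dx v t x (u (t, x))
        + ContinuousLinearMap.adjoint (Dx u t x) (v (t, x)) = grad b t x)
    (K : Set (EuclideanSpace ℝ (Fin 3))) (hK : IsCompact K)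
    (hsupp : ∀ (t : ℝ) (x : EuclideanSpace ℝ (Fin 3)), x ∉ K → v (t, x) = 0) :
    ∀ t₁ t₂ : ℝ,
      (∫ x, ⟪v (t₁, x), curl v t₁ x⟫) = ∫ x, ⟪v (t₂, x), curl v t₂ x⟫ := by
  -- translate Kelvin equation into scalar component form
  have hkel : ∀ (i : Fin 3) (p : P3),
      pdd ett (vcmp v i) p
        = pdd (exi i) b p
          - (vcmp u 0 p * pdd (exi 0) (vcmp v i) p + vcmp u 1 p * pdd (exi 1) (vcmp v i) p
              + vcmp u 2 p * pdd (exi 2) (vcmp v i) p)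
          - (vcmp v 0 p * pdd (exi i) (vcmp u 0) p + vcmp v 1 p * pdd (exi i) (vcmp u 1) p
              + vcmp v 2 p * pdd (exi i) (vcmp u 2) p) := by
    intro i p
    have hk := kelvin_cmp u v b hu hv hb hkelvin p.1 p.2 i
    rw [Prod.mk.eta] at hk
    have e1 : ∀ j, vcmp u j p = u p j := fun _ => rfl
    have e2 : ∀ j, vcmp v j p = v p j := fun _ => rfl
    simp only [e1, e2]
    linarith
  -- the key pointwise divergence identity
  have hident := pointwise_id hu hv hb hkel
  -- support facts
  have hv0 : ∀ (i : Fin 3) (p : P3), p.2 ∉ K → vcmp v i p = 0 := by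
    intro i p hp
    show v p i = 0
    rw [← Prod.mk.eta (p := p), hsupp p.1 p.2 hp]
    rfl
  have hH0 : ∀ p : P3, p.2 ∉ K → hel v p = 0 := by
    intro p hp
    rw [hel_eq v]
    simp only [hv0 0 p hp, hv0 1 p hp, hv0 2 p hp, zero_mul, add_zero]
  have homg0 : ∀ (i : Fin 3) (p : P3), p.2 ∉ K → omg v i p = 0 := by
    intro i p hp
    fin_cases i <;>
      simp only [omg, pdd_vanish hK.isClosed (hv0 _) hp, sub_zero, zero_sub, neg_eq_zero] <;>
      exact pdd_vanish hK.isClosed (hv0 _) hp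
  have hW0 : ∀ (i : Fin 3) (p : P3), p.2 ∉ K → Wf u v b i p = 0 := by
    intro i p hp
    show b p * omg v i p - hel v p * vcmp u i p = 0
    rw [homg0 i p hp, hH0 p hp]
    ring
  -- constancy of the integral of hel
  have hconst := const_of_timederiv_div (hel v) (Wf u v b) (hel_smooth hv)
    (fun i => Wf_smooth hu hv hb i) K hK hH0 (fun i p hp => hW0 i p hp) hident
  -- identify the helicity integrand with hel
  have hintegrand : ∀ (t : ℝ) (x : EuclideanSpace ℝ (Fin 3)),
      ⟪v (t, x), curl v t x⟫ = hel v (t, x) := by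
    intro t x
    have hc0 : curl v t x 0 = omg v 0 (t, x) := by
      simp only [curl, WithLp.equiv_symm_apply, PiLp.toLp_apply, Matrix.cons_val_zero]
      rw [Dx_cmp hv, Dx_cmp hv]; rfl
    have hc1 : curl v t x 1 = omg v 1 (t, x) := by
      simp only [curl, WithLp.equiv_symm_apply, PiLp.toLp_apply, Matrix.cons_val_one, Matrix.head_cons]
      rw [Dx_cmp hv, Dx_cmp hv]; rfl
    have hc2 : curl v t x 2 = omg v 2 (t, x) := by
      simp only [curl, WithLp.equiv_symm_apply, PiLp.toLp_apply, Matrix.cons_val_two, Matrix.tail_cons,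
        Matrix.head_cons]
      rw [Dx_cmp hv, Dx_cmp hv]; rfl
    rw [show ⟪v (t, x), curl v t x⟫ = ∑ i : Fin 3, v (t, x) i * curl v t x i from by
      simp [PiLp.inner_apply, RCLike.inner_apply, mul_comm]]
    rw [hel_eq v]
    simp only [Fin.sum_univ_three, hc0, hc1, hc2]
    rfl
  intro t₁ t₂
  calc (∫ x, ⟪v (t₁, x), curl v t₁ x⟫) = ∫ x : E3, hel v (t₁, x) := by
        congr 1; funext x; exact hintegrand t₁ x
    _ = ∫ x : E3, hel v (t₂, x) := hconst t₁ t₂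
    _ = ∫ x, ⟪v (t₂, x), curl v t₂ x⟫ := by
        congr 1; funext x; exact (hintegrand t₂ x).symm
end
end
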